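/- arXiv:1701.03753 — 10 statements merged into one kernel-verified Lean document; each statement's English description precedes it below -/
import Mathlib

section
/- Let X and Y be independent nonnegative real random variables on a probability space and let σ² > 0. If E[ln(1 + X/σ²)] < ∞, then E[ln(1 + X/(Y + σ²))] = ∫₀^∞ (1/t)·(1 − E[e^{−t·X}])·E[e^{−t·Y}]·e^{−t·σ²} dt. -/
/-!
For `0 < a ≤ b`, writing `1 / x = ∫₀^∞ e^{-tx} dt` and integrating over `x ∈ (a, b]` gives, after
swapping the integrals, the Frullani-type identity
`log (b / a) = ∫₀^∞ (e^{-ta} - e^{-tb}) / t dt`.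
With `a = Y + σ²` and `b = Y + σ² + X` this expresses `log (1 + X / (Y + σ²))` as an integral of a
nonnegative kernel, so Tonelli lets us take the expectation inside the `t`-integral. There the
kernel is `t⁻¹ e^{-tσ²} (e^{-tY} - e^{-t(X+Y)})`, and independence factors
`E[e^{-t(X+Y)}] = E[e^{-tX}] E[e^{-tY}]`.
-/

open MeasureTheory Set ProbabilityTheory

namespace Real

theorem integral_exp_neg_mul_interval {t : ℝ} (ht : t ≠ 0) (a b : ℝ) :
    ∫ x in a..b, exp (-(t * x)) = (exp (-(t * a)) - exp (-(t * b))) / t := by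
  rw [intervalIntegral.integral_comp_mul_left (fun y => exp (-y)) ht,
    intervalIntegral.integral_comp_neg, integral_exp, smul_eq_mul]
  field_simp

theorem exp_sub_exp_div_eq_mul (t x y c : ℝ) :
    (exp (-(t * (y + c))) - exp (-(t * (y + c + x)))) / t
      = 1 / t * exp (-(t * c)) * (exp (-(t * y)) - exp (-(t * (x + y)))) := by
  simp only [mul_add, neg_add, exp_add]
  ring

theorem exp_sub_exp_div_nonneg {a b : ℝ} (hab : a ≤ b) (t : ℝ) :
    0 ≤ (exp (-(t * a)) - exp (-(t * b))) / t := by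
  rcases eq_or_ne t 0 with rfl | ht
  · simp
  rw [← integral_exp_neg_mul_interval ht]
  exact intervalIntegral.integral_nonneg hab fun _ _ => (exp_pos _).le

theorem lintegral_exp_neg_mul_Ioi {x : ℝ} (hx : 0 < x) :
    ∫⁻ t in Ioi 0, ENNReal.ofReal (exp (-(t * x))) = ENNReal.ofReal x⁻¹ := by
  have hrw : (fun t => exp (-(t * x))) = fun t => exp (-x * t) := by
    ext t; ring_nf
  rw [← ofReal_integral_eq_lintegral_ofReal, hrw, integral_exp_mul_Ioi (neg_lt_zero.2 hx)]
  · simp [neg_div, one_div]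
  · rw [hrw]; exact integrableOn_exp_mul_Ioi (neg_lt_zero.2 hx) 0
  · exact ae_of_all _ fun _ => (exp_pos _).le

theorem lintegral_exp_sub_exp_div_Ioi {a b : ℝ} (ha : 0 < a) (hab : a ≤ b) :
    ∫⁻ t in Ioi 0, ENNReal.ofReal ((exp (-(t * a)) - exp (-(t * b))) / t)
      = ENNReal.ofReal (log (b / a)) := by
  have hpos : ∀ x ∈ Icc a b, 0 < x := fun x hx => ha.trans_le hx.1
  have hslice : ∀ t ∈ Ioi (0 : ℝ), ENNReal.ofReal ((exp (-(t * a)) - exp (-(t * b))) / t)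
      = ∫⁻ x in Ioc a b, ENNReal.ofReal (exp (-(t * x))) := by
    intro t ht
    rw [← integral_exp_neg_mul_interval (ne_of_gt ht), intervalIntegral.integral_of_le hab,
      ofReal_integral_eq_lintegral_ofReal (by fun_prop : Continuous _).integrableOn_Ioc
        (ae_of_all _ fun _ => (exp_pos _).le)]
  have hinv : IntegrableOn (fun x : ℝ => x⁻¹) (Ioc a b) :=
    (continuousOn_inv₀.mono fun x hx => (hpos x hx).ne').integrableOn_Icc.mono_set
      Ioc_subset_Icc_self
  calc ∫⁻ t in Ioi 0, ENNReal.ofReal ((exp (-(t * a)) - exp (-(t * b))) / t)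
      = ∫⁻ t in Ioi 0, ∫⁻ x in Ioc a b, ENNReal.ofReal (exp (-(t * x))) :=
        setLIntegral_congr_fun measurableSet_Ioi hslice
    _ = ∫⁻ x in Ioc a b, ∫⁻ t in Ioi 0, ENNReal.ofReal (exp (-(t * x))) :=
        lintegral_lintegral_swap (by fun_prop)
    _ = ∫⁻ x in Ioc a b, ENNReal.ofReal x⁻¹ :=
        setLIntegral_congr_fun measurableSet_Ioc fun x hx =>
          lintegral_exp_neg_mul_Ioi (hpos x (Ioc_subset_Icc_self hx))
    _ = ENNReal.ofReal (log (b / a)) := by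
        rw [← ofReal_integral_eq_lintegral_ofReal hinv, ← intervalIntegral.integral_of_le hab,
          integral_inv_of_pos ha (ha.trans_le hab)]
        exact (ae_restrict_iff' measurableSet_Ioc).2 (ae_of_all _ fun x hx =>
          (inv_pos.2 (hpos x (Ioc_subset_Icc_self hx))).le)

theorem integrableOn_exp_sub_exp_div_Ioi {a b : ℝ} (ha : 0 < a) (hab : a ≤ b) :
    IntegrableOn (fun t => (exp (-(t * a)) - exp (-(t * b))) / t) (Ioi 0) := by
  refine ⟨(by fun_prop : Measurable _).aestronglyMeasurable,
    (hasFiniteIntegral_iff_ofReal (ae_of_all _ (exp_sub_exp_div_nonneg hab))).2 ?_⟩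
  rw [lintegral_exp_sub_exp_div_Ioi ha hab]
  exact ENNReal.ofReal_lt_top

theorem integral_exp_sub_exp_div_Ioi {a b : ℝ} (ha : 0 < a) (hab : a ≤ b) :
    ∫ t in Ioi 0, (exp (-(t * a)) - exp (-(t * b))) / t = log (b / a) := by
  rw [integral_eq_lintegral_of_nonneg_ae (ae_of_all _ (exp_sub_exp_div_nonneg hab))
    (integrableOn_exp_sub_exp_div_Ioi ha hab).aestronglyMeasurable,
    lintegral_exp_sub_exp_div_Ioi ha hab,
    ENNReal.toReal_ofReal (log_nonneg ((one_le_div ha).2 hab))]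

end Real

section Tonelli

variable {α β : Type*} [MeasurableSpace α] [MeasurableSpace β] {μ : Measure α} {ν : Measure β}
  {f : α → β → ℝ}

theorem integral_integral_eq_toReal_lintegral_lintegral [SFinite ν]
    (hf : Measurable (Function.uncurry f)) (hf_nonneg : ∀ a b, 0 ≤ f a b)
    (hf_int : ∀ᵐ a ∂μ, Integrable (f a) ν) :
    ∫ a, ∫ b, f a b ∂ν ∂μ = (∫⁻ a, ∫⁻ b, ENNReal.ofReal (f a b) ∂ν ∂μ).toReal := by
  have hslice : ∀ a, ∫ b, f a b ∂ν = (∫⁻ b, ENNReal.ofReal (f a b) ∂ν).toReal := fun a =>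
    integral_eq_lintegral_of_nonneg_ae (ae_of_all _ (hf_nonneg a))
      (hf.comp measurable_prodMk_left).aestronglyMeasurable
  simp_rw [hslice]
  refine integral_toReal hf.ennreal_ofReal.lintegral_prod_right'.aemeasurable ?_
  filter_upwards [hf_int] with a ha
  exact (hasFiniteIntegral_iff_ofReal (ae_of_all _ (hf_nonneg a))).1 ha.2

theorem integral_integral_swap_of_nonneg [SFinite μ] [SFinite ν]
    (hf : Measurable (Function.uncurry f)) (hf_nonneg : ∀ a b, 0 ≤ f a b)
    (hμ : ∀ᵐ a ∂μ, Integrable (f a) ν) (hν : ∀ᵐ b ∂ν, Integrable (fun a => f a b) μ) :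
    ∫ a, ∫ b, f a b ∂ν ∂μ = ∫ b, ∫ a, f a b ∂μ ∂ν := by
  rw [integral_integral_eq_toReal_lintegral_lintegral hf hf_nonneg hμ,
    integral_integral_eq_toReal_lintegral_lintegral (f := fun b a => f a b)
      (hf.comp measurable_swap) (fun b a => hf_nonneg a b) hν,
    lintegral_lintegral_swap hf.ennreal_ofReal.aemeasurable]

end Tonelli

namespace ProbabilityTheory

variable {Ω : Type*} [MeasurableSpace Ω] {μ : Measure Ω} {X Y : Ω → ℝ} {t : ℝ}

theorem integrable_exp_neg_mul_of_nonneg [IsFiniteMeasure μ] (hX : Measurable X)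
    (hX_nonneg : ∀ ω, 0 ≤ X ω) (ht : 0 ≤ t) :
    Integrable (fun ω => Real.exp (-(t * X ω))) μ := by
  refine (integrable_const 1).mono' (by fun_prop) (ae_of_all _ fun ω => ?_)
  rw [Real.norm_eq_abs, abs_of_pos (Real.exp_pos _), Real.exp_le_one_iff, neg_nonpos]
  exact mul_nonneg ht (hX_nonneg ω)

theorem IndepFun.integral_exp_neg_mul_add (hind : IndepFun X Y μ) (hX : Measurable X)
    (hY : Measurable Y) (t : ℝ) :
    ∫ ω, Real.exp (-(t * (X ω + Y ω))) ∂μ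
      = (∫ ω, Real.exp (-(t * X ω)) ∂μ) * ∫ ω, Real.exp (-(t * Y ω)) ∂μ := by
  simpa only [mgf, Pi.add_apply, neg_mul_eq_neg_mul] using
    hind.mgf_add' hX.aestronglyMeasurable hY.aestronglyMeasurable (t := -t)

theorem integrable_exp_sub_exp_div [IsFiniteMeasure μ] (hX : Measurable X) (hY : Measurable Y)
    (hX_nonneg : ∀ ω, 0 ≤ X ω) (hY_nonneg : ∀ ω, 0 ≤ Y ω) (c : ℝ) (ht : 0 ≤ t) :
    Integrable
      (fun ω => (Real.exp (-(t * (Y ω + c))) - Real.exp (-(t * (Y ω + c + X ω)))) / t) μ := by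
  simp_rw [Real.exp_sub_exp_div_eq_mul]
  exact ((integrable_exp_neg_mul_of_nonneg hY hY_nonneg ht).sub
    (integrable_exp_neg_mul_of_nonneg (hX.add hY)
      (fun ω => add_nonneg (hX_nonneg ω) (hY_nonneg ω)) ht)).const_mul _

theorem IndepFun.integral_exp_sub_exp_div [IsFiniteMeasure μ] (hind : IndepFun X Y μ)
    (hX : Measurable X) (hY : Measurable Y) (hX_nonneg : ∀ ω, 0 ≤ X ω)
    (hY_nonneg : ∀ ω, 0 ≤ Y ω) (c : ℝ) (ht : 0 ≤ t) :
    ∫ ω, (Real.exp (-(t * (Y ω + c))) - Real.exp (-(t * (Y ω + c + X ω)))) / t ∂μ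
      = 1 / t * (1 - ∫ ω, Real.exp (-(t * X ω)) ∂μ) * (∫ ω, Real.exp (-(t * Y ω)) ∂μ)
          * Real.exp (-(t * c)) := by
  simp_rw [Real.exp_sub_exp_div_eq_mul]
  rw [integral_const_mul, integral_sub (integrable_exp_neg_mul_of_nonneg hY hY_nonneg ht)
    (integrable_exp_neg_mul_of_nonneg (X := fun ω => X ω + Y ω) (hX.add hY)
      (fun ω => add_nonneg (hX_nonneg ω) (hY_nonneg ω)) ht),
    hind.integral_exp_neg_mul_add hX hY]
  ring

end ProbabilityTheory

theorem hamdi_expectation_form_general {Ω : Type*} [MeasurableSpace Ω]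
    (μ : Measure Ω) [IsProbabilityMeasure μ]
    (X Y : Ω → ℝ) (hX : Measurable X) (hY : Measurable Y)
    (hXpos : ∀ ω, 0 ≤ X ω) (hYpos : ∀ ω, 0 ≤ Y ω)
    (hindep : IndepFun X Y μ)
    (σ2 : ℝ) (hσ : 0 < σ2) :
    ∫ ω, Real.log (1 + X ω / (Y ω + σ2)) ∂μ
      = ∫ t in Ioi (0 : ℝ),
          (1 / t) * (1 - ∫ ω, Real.exp (-(t * X ω)) ∂μ)
            * (∫ ω, Real.exp (-(t * Y ω)) ∂μ) * Real.exp (-(t * σ2)) := by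
  have hs : ∀ ω, 0 < Y ω + σ2 := fun ω => add_pos_of_nonneg_of_pos (hYpos ω) hσ
  have hle : ∀ ω, Y ω + σ2 ≤ Y ω + σ2 + X ω := fun ω => le_add_of_nonneg_right (hXpos ω)
  calc ∫ ω, Real.log (1 + X ω / (Y ω + σ2)) ∂μ
      = ∫ ω, (∫ t in Ioi 0,
          (Real.exp (-(t * (Y ω + σ2))) - Real.exp (-(t * (Y ω + σ2 + X ω)))) / t) ∂μ := by
        congr 1 with ω
        rw [Real.integral_exp_sub_exp_div_Ioi (hs ω) (hle ω), add_div, div_self (hs ω).ne',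
          add_comm]
    _ = ∫ t in Ioi 0, ∫ ω,
          (Real.exp (-(t * (Y ω + σ2))) - Real.exp (-(t * (Y ω + σ2 + X ω)))) / t ∂μ :=
        integral_integral_swap_of_nonneg (by fun_prop)
          (fun ω t => Real.exp_sub_exp_div_nonneg (hle ω) t)
          (ae_of_all _ fun ω => Real.integrableOn_exp_sub_exp_div_Ioi (hs ω) (hle ω))
          ((ae_restrict_iff' measurableSet_Ioi).2 (ae_of_all _ fun t ht =>
            integrable_exp_sub_exp_div hX hY hXpos hYpos σ2 (le_of_lt ht)))
    _ = _ := setIntegral_congr_fun measurableSet_Ioi fun t ht =>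
        hindep.integral_exp_sub_exp_div hX hY hXpos hYpos σ2 (le_of_lt ht)

/-- Expectation form of Hamdi's lemma: for independent nonnegative random variables `X`, `Y`
and noise power `σ² > 0`, if `E[ln(1 + X/σ²)] < ∞`, then
`E[ln(1 + X/(Y + σ²))] = ∫₀^∞ (1/t)(1 − E[e^{−tX}]) E[e^{−tY}] e^{−tσ²} dt`. -/
theorem hamdi_expectation_form {Ω : Type*} [MeasurableSpace Ω]
    (μ : Measure Ω) [IsProbabilityMeasure μ]
    (X Y : Ω → ℝ) (hX : Measurable X) (hY : Measurable Y)
    (hXpos : ∀ ω, 0 ≤ X ω) (hYpos : ∀ ω, 0 ≤ Y ω)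
    (hindep : IndepFun X Y μ)
    (σ2 : ℝ) (hσ : 0 < σ2)
    (hint : Integrable (fun ω => Real.log (1 + X ω / σ2)) μ) :
    ∫ ω, Real.log (1 + X ω / (Y ω + σ2)) ∂μ
      = ∫ t in Ioi (0 : ℝ),
          (1 / t) * (1 - ∫ ω, Real.exp (-(t * X ω)) ∂μ)
            * (∫ ω, Real.exp (-(t * Y ω)) ∂μ) * Real.exp (-(t * σ2)) :=
  hamdi_expectation_form_general μ X Y hX hY hXpos hYpos hindep σ2 hσ
end

section
/- Let R be a real random variable with density f_R(r) = 2π λ_M r exp(−π λ_M r²) for r > 0 (λ_M > 0), let P_D = min{P_max^D, (I_th/β)·R^{α_M}} with P_max^D, I_th, β > 0, α_M > 0, and set ϖ₀ = π λ_M (β P_max^D / I_th)^{2/α_M}. Then E[P_D^{2/α_M}] = ((P_max^D)^{2/α_M}/ϖ₀)·(1 − e^{−ϖ₀} − ϖ₀ e^{−ϖ₀}) + (P_max^D)^{2/α_M}·e^{−ϖ₀}. -/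
/-!
Since `α · (2/α) = 2`, the power `P_D^{2/α}` equals `min (P_max^{2/α}) (c R²)` with
`c = (I_th/β)^{2/α}`; as `ϖ₀ = a P_max^{2/α} / c` with `a = π λ_M`, the moment is
`(c/a) E[min ϖ₀ (a R²)]`. Under the Rayleigh law `a R²` is a standard exponential variable, and
`E[min t S] = ∫₀ᵗ s e^{-s} ds + t e^{-t} = 1 - e^{-t}`; the paper's formula is this value with
its two pieces written out.
-/

open MeasureTheory Set Real

theorem integral_comp_eq_setIntegral_Ioi_mul_density {Ω : Type*} [MeasurableSpace Ω]
    {μ : Measure Ω} {R : Ω → ℝ} (hR : AEMeasurable R μ) {f : ℝ → ℝ}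
    (hf : Measurable f) (hf_nonneg : ∀ r ∈ Ioi 0, 0 ≤ f r)
    (hdist : μ.map R = volume.withDensity fun r => ENNReal.ofReal (if 0 < r then f r else 0))
    {g : ℝ → ℝ} (hg : Measurable g) :
    ∫ ω, g (R ω) ∂μ = ∫ r in Ioi 0, f r * g r := by
  have hdens : Measurable fun r : ℝ => ENNReal.ofReal (if 0 < r then f r else 0) :=
    ENNReal.measurable_ofReal.comp (Measurable.ite measurableSet_Ioi hf measurable_const)
  rw [← integral_map hR hg.aestronglyMeasurable, hdist,
    integral_withDensity_eq_integral_toReal_smul hdens (ae_of_all _ fun _ => ENNReal.ofReal_lt_top),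
    ← integral_indicator measurableSet_Ioi]
  congr 1 with r
  by_cases hr : 0 < r
  · rw [if_pos hr, indicator_of_mem (show r ∈ Ioi 0 from hr),
      ENNReal.toReal_ofReal (hf_nonneg r hr), smul_eq_mul]
  · rw [if_neg hr, indicator_of_notMem (show r ∉ Ioi 0 from hr), ENNReal.toReal_ofReal le_rfl,
      zero_smul]

theorem min_mul_rpow_rpow {P k r : ℝ} (α : ℝ) {p : ℝ} (hP : 0 ≤ P) (hk : 0 ≤ k)
    (hr : 0 ≤ r) (hp : 0 ≤ p) :
    min P (k * r ^ α) ^ p = min (P ^ p) (k ^ p * r ^ (α * p)) := by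
  rw [rpow_mul hr, ← mul_rpow hk (rpow_nonneg hr α)]
  rcases le_total P (k * r ^ α) with h | h
  · rw [min_eq_left h, min_eq_left (rpow_le_rpow hP h hp)]
  · rw [min_eq_right h, min_eq_right (rpow_le_rpow (by positivity) h hp)]

theorem hasDerivAt_exp_neg_mul_sq (a x : ℝ) :
    HasDerivAt (fun x => exp (-(a * x ^ 2))) (-(2 * a * x * exp (-(a * x ^ 2)))) x :=
  (((hasDerivAt_pow 2 x).const_mul a).fun_neg).exp.congr_deriv (by push_cast; ring)

theorem integrable_two_mul_mul_exp_neg_mul_sq {a : ℝ} (ha : 0 < a) :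
    Integrable fun x => 2 * a * x * exp (-(a * x ^ 2)) := by
  convert (integrable_mul_exp_neg_mul_sq ha).const_mul (2 * a) using 2
  simp only [neg_mul]
  ring

theorem integral_Ioi_two_mul_mul_exp_neg_mul_sq {a : ℝ} (ha : 0 < a) (b : ℝ) :
    ∫ x in Ioi b, 2 * a * x * exp (-(a * x ^ 2)) = exp (-(a * b ^ 2)) := by
  have hderiv : ∀ x ∈ Ici b,
      HasDerivAt (fun x => -exp (-(a * x ^ 2))) (2 * a * x * exp (-(a * x ^ 2))) x :=
    fun x _ => by simpa using (hasDerivAt_exp_neg_mul_sq a x).fun_neg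
  have hlim : Filter.Tendsto (fun x => -exp (-(a * x ^ 2))) Filter.atTop (nhds (-0)) :=
    (tendsto_exp_atBot.comp (Filter.tendsto_neg_atBot_iff.mpr
      ((Filter.tendsto_pow_atTop two_ne_zero).const_mul_atTop ha))).neg
  rw [integral_Ioi_of_hasDerivAt_of_tendsto' hderiv
    (integrable_two_mul_mul_exp_neg_mul_sq ha).integrableOn (by simpa using hlim)]
  ring

theorem integral_two_mul_mul_exp_neg_mul_sq_mul_sq (a b : ℝ) :
    ∫ x in (0 : ℝ)..b, 2 * a * x * exp (-(a * x ^ 2)) * (a * x ^ 2)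
      = 1 - (1 + a * b ^ 2) * exp (-(a * b ^ 2)) := by
  have hderiv : ∀ x ∈ uIcc (0 : ℝ) b,
      HasDerivAt (fun x => -((1 + a * x ^ 2) * exp (-(a * x ^ 2))))
        (2 * a * x * exp (-(a * x ^ 2)) * (a * x ^ 2)) x := fun x _ =>
    ((((hasDerivAt_pow 2 x).const_mul a).const_add 1).fun_mul
      (hasDerivAt_exp_neg_mul_sq a x)).fun_neg.congr_deriv (by push_cast; ring)
  rw [intervalIntegral.integral_eq_sub_of_hasDerivAt hderiv
    (by apply Continuous.intervalIntegrable; fun_prop)]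
  simp only [ne_eq, OfNat.ofNat_ne_zero, not_false_eq_true, zero_pow, mul_zero, add_zero,
    neg_zero, exp_zero, mul_one, sub_neg_eq_add]
  ring

theorem integral_Ioi_two_mul_mul_exp_neg_mul_sq_mul_min {a : ℝ} (ha : 0 < a) {t : ℝ}
    (ht : 0 ≤ t) :
    ∫ x in Ioi 0, 2 * a * x * exp (-(a * x ^ 2)) * min t (a * x ^ 2) = 1 - exp (-t) := by
  set b := √(t / a)
  have hb : a * b ^ 2 = t := by rw [sq_sqrt (div_nonneg ht ha.le)]; field_simp
  have hb0 : 0 ≤ b := sqrt_nonneg _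
  have h_lower : ∀ x ∈ Ioc 0 b, min t (a * x ^ 2) = a * x ^ 2 := fun x hx =>
    min_eq_right (hb ▸ mul_le_mul_of_nonneg_left (pow_le_pow_left₀ hx.1.le hx.2 2) ha.le)
  have h_upper : ∀ x ∈ Ioi b, min t (a * x ^ 2) = t := fun x hx =>
    min_eq_left (hb ▸ mul_le_mul_of_nonneg_left (pow_le_pow_left₀ hb0 (le_of_lt hx) 2) ha.le)
  rw [← Ioc_union_Ioi_eq_Ioi hb0, setIntegral_union Ioc_disjoint_Ioi_same measurableSet_Ioi
      (Continuous.integrableOn_Ioc (by fun_prop))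
      (((integrable_two_mul_mul_exp_neg_mul_sq ha).mul_const t).integrableOn.congr_fun
        (fun x hx => by rw [h_upper x hx]) measurableSet_Ioi),
    setIntegral_congr_fun measurableSet_Ioc (fun x hx => by rw [h_lower x hx]),
    setIntegral_congr_fun measurableSet_Ioi (fun x hx => by rw [h_upper x hx]),
    ← intervalIntegral.integral_of_le hb0, integral_two_mul_mul_exp_neg_mul_sq_mul_sq,
    integral_mul_const,
    integral_Ioi_two_mul_mul_exp_neg_mul_sq ha, hb]
  ring

theorem integral_Ioi_two_mul_mul_exp_neg_mul_sq_mul_min_mul_sq {a : ℝ} (ha : 0 < a) {M c : ℝ}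
    (hM : 0 ≤ M) (hc : 0 < c) :
    ∫ x in Ioi 0, 2 * a * x * exp (-(a * x ^ 2)) * min M (c * x ^ 2)
      = c / a * (1 - exp (-(a * M / c))) := by
  have hscale : ∀ x, min M (c * x ^ 2) = c / a * min (a * M / c) (a * x ^ 2) := by
    intro x
    rw [mul_min_of_nonneg _ _ (by positivity)]
    congr 1 <;> field_simp
  simp_rw [hscale, mul_left_comm _ (c / a)]
  rw [integral_const_mul, integral_Ioi_two_mul_mul_exp_neg_mul_sq_mul_min ha (by positivity)]

theorem d2d_power_moment_general {Ω : Type*} [MeasurableSpace Ω]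
    (μ : Measure Ω)
    (R : Ω → ℝ) (hR : Measurable R)
    (lamM : ℝ) (hlam : 0 < lamM)
    (hdist : Measure.map R μ = (volume : Measure ℝ).withDensity
      (fun r => ENNReal.ofReal
        (if 0 < r then 2 * Real.pi * lamM * r * Real.exp (-(Real.pi * lamM * r ^ 2)) else 0)))
    (PmaxD Ith β αM : ℝ) (hPmax : 0 < PmaxD) (hIth : 0 < Ith) (hβ : 0 < β) (hαM : 0 < αM)
    (PD : Ω → ℝ) (hPD : ∀ ω, PD ω = min PmaxD ((Ith / β) * R ω ^ αM))
    (ϖ₀ : ℝ) (hϖ₀ : ϖ₀ = Real.pi * lamM * (β * PmaxD / Ith) ^ (2 / αM)) :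
    ∫ ω, PD ω ^ (2 / αM) ∂μ
      = (PmaxD ^ (2 / αM) / ϖ₀) * (1 - Real.exp (-ϖ₀) - ϖ₀ * Real.exp (-ϖ₀))
        + PmaxD ^ (2 / αM) * Real.exp (-ϖ₀) := by
  set p := 2 / αM
  set c := (Ith / β) ^ p
  have hc : 0 < c := by positivity
  have hαp : αM * p = 2 := mul_div_cancel₀ 2 hαM.ne'
  have hϖ₀c : ϖ₀ = π * lamM * PmaxD ^ p / c := by
    rw [hϖ₀, div_rpow (by positivity) hIth.le, mul_rpow hβ.le hPmax.le]
    simp only [c]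
    rw [div_rpow hIth.le hβ.le]
    field_simp
  have hϖ₀_ne : ϖ₀ ≠ 0 := by rw [hϖ₀c]; positivity
  have hmoment : ∫ ω, PD ω ^ p ∂μ = ∫ r in Ioi 0,
      2 * π * lamM * r * exp (-(π * lamM * r ^ 2)) * min PmaxD (Ith / β * r ^ αM) ^ p := by
    simp only [hPD]
    exact integral_comp_eq_setIntegral_Ioi_mul_density
      (g := fun r => min PmaxD (Ith / β * r ^ αM) ^ p) hR.aemeasurable (by fun_prop)
      (fun r (hr : 0 < r) => by positivity) hdist (by fun_prop)
  have hpointwise : ∀ r ∈ Ioi (0 : ℝ),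
      2 * π * lamM * r * exp (-(π * lamM * r ^ 2)) * min PmaxD (Ith / β * r ^ αM) ^ p
        = 2 * (π * lamM) * r * exp (-((π * lamM) * r ^ 2)) * min (PmaxD ^ p) (c * r ^ 2) := by
    intro r hr
    rw [min_mul_rpow_rpow αM hPmax.le (by positivity) (le_of_lt hr) (by positivity), hαp,
      rpow_two]
    ring
  rw [hmoment, setIntegral_congr_fun measurableSet_Ioi hpointwise,
    integral_Ioi_two_mul_mul_exp_neg_mul_sq_mul_min_mul_sq (by positivity) (by positivity) hc,
    ← hϖ₀c]
  have hM : PmaxD ^ p = c * ϖ₀ / (π * lamM) := by rw [hϖ₀c]; field_simp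
  rw [hM]
  field_simp
  ring

/-- Equation (30) of the paper: with the Rayleigh nearest-distance density and the D2D power
control `P_D = min{P_max^D, (I_th/β)·R^{α_M}}`, setting
`ϖ₀ = π λ_M (β P_max^D / I_th)^{2/α_M}`, the `(2/α_M)`-th moment of `P_D` is
`E[P_D^{2/α_M}] = ((P_max^D)^{2/α_M}/ϖ₀)(1 − e^{−ϖ₀} − ϖ₀ e^{−ϖ₀}) + (P_max^D)^{2/α_M} e^{−ϖ₀}`. -/
theorem d2d_power_moment {Ω : Type*} [MeasurableSpace Ω]
    (μ : Measure Ω) [IsProbabilityMeasure μ]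
    (R : Ω → ℝ) (hR : Measurable R)
    (lamM : ℝ) (hlam : 0 < lamM)
    (hdist : Measure.map R μ = (volume : Measure ℝ).withDensity
      (fun r => ENNReal.ofReal
        (if 0 < r then 2 * Real.pi * lamM * r * Real.exp (-(Real.pi * lamM * r ^ 2)) else 0)))
    (PmaxD Ith β αM : ℝ) (hPmax : 0 < PmaxD) (hIth : 0 < Ith) (hβ : 0 < β) (hαM : 0 < αM)
    (PD : Ω → ℝ) (hPD : ∀ ω, PD ω = min PmaxD ((Ith / β) * R ω ^ αM))
    (ϖ₀ : ℝ) (hϖ₀ : ϖ₀ = Real.pi * lamM * (β * PmaxD / Ith) ^ (2 / αM)) :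
    ∫ ω, PD ω ^ (2 / αM) ∂μ
      = (PmaxD ^ (2 / αM) / ϖ₀) * (1 - Real.exp (-ϖ₀) - ϖ₀ * Real.exp (-ϖ₀))
        + PmaxD ^ (2 / αM) * Real.exp (-ϖ₀) :=
  d2d_power_moment_general μ R hR lamM hlam hdist PmaxD Ith β αM hPmax hIth hβ hαM PD hPD ϖ₀ hϖ₀
end

section
/- Let R be a real random variable with density f_R(r) = 2π λ_M r exp(−π λ_M r²) for r > 0 (λ_M > 0), let P_D = min{P_max^D, (I_th/β)·R^{α_M}} with P_max^D, I_th, β > 0, α_M > 0, let α_D > 0, and set ϖ₀ = π λ_M (β P_max^D / I_th)^{2/α_M}. Then E[P_D^{2/α_D}] = (π λ_M (β/I_th)^{2/α_M})^{−α_M/α_D}·(Γ(1 + α_M/α_D) − Γ(1 + α_M/α_D, ϖ₀)) + (P_max^D)^{2/α_D}·e^{−ϖ₀}, where Γ(s) is the Gamma function and Γ(s,T) = ∫_T^∞ u^{s−1} e^{−u} du is the upper incomplete Gamma function. -/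
/-!
Substituting `u = π λ_M r²` turns the Rayleigh law of `R` into the standard exponential law, and
in this variable the power control reads `P_D^{2/α_D} = A · min(ϖ₀, u)^{α_M/α_D}` with
`A = (π λ_M (β/I_th)^{2/α_M})^{−α_M/α_D}`: the cap `P_max^D` is reached exactly at `u = ϖ₀`.
Splitting `∫₀^∞ e^{−u} min(ϖ₀, u)^q du` at `ϖ₀` gives a lower incomplete Gamma integral plus
`ϖ₀^q e^{−ϖ₀}`, and `A ϖ₀^q = (P_max^D)^{2/α_D}`.
-/

open MeasureTheory Set

/-- The upper incomplete Gamma function `Γ(s,T) = ∫_T^∞ u^{s−1} e^{−u} du`. -/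
noncomputable def upperGamma (s T : ℝ) : ℝ := ∫ u in Set.Ioi T, u ^ (s - 1) * Real.exp (-u)

open Real

/-- The power `k r^α` as a function of `u = c r²`. -/
noncomputable def powerLaw (k c α u : ℝ) : ℝ := k * (u / c) ^ (α / 2)

section powerLaw

variable {k c α : ℝ}

theorem powerLaw_mul_sq (hc : 0 < c) {r : ℝ} (hr : 0 ≤ r) :
    powerLaw k c α (c * r ^ 2) = k * r ^ α := by
  rw [powerLaw, mul_div_cancel_left₀ _ hc.ne', ← rpow_natCast, ← rpow_mul hr]
  norm_num [mul_div_cancel₀ α two_ne_zero]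

theorem powerLaw_mul_div_rpow (hk : 0 < k) (hc : 0 < c) (hα : 0 < α) {P : ℝ} (hP : 0 ≤ P) :
    powerLaw k c α (c * (P / k) ^ (2 / α)) = P := by
  rw [powerLaw, mul_div_cancel_left₀ _ hc.ne', ← rpow_mul (by positivity),
    show 2 / α * (α / 2) = 1 by field_simp, rpow_one, mul_div_cancel₀ _ hk.ne']

theorem powerLaw_monotoneOn (hk : 0 ≤ k) (hc : 0 < c) (hα : 0 ≤ α) :
    MonotoneOn (powerLaw k c α) (Ici 0) := fun _ hx _ _ hxy =>
  mul_le_mul_of_nonneg_left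
    (rpow_le_rpow (div_nonneg hx hc.le) (div_le_div_of_nonneg_right hxy hc.le) (by positivity)) hk

theorem powerLaw_rpow (hk : 0 < k) (hc : 0 < c) (hα : 0 < α) (γ : ℝ) {u : ℝ} (hu : 0 ≤ u) :
    powerLaw k c α u ^ (2 / γ) = (c * k⁻¹ ^ (2 / α)) ^ (-(α / γ)) * u ^ (α / γ) := by
  have hexp₁ : α / 2 * (2 / γ) = α / γ := by ring
  have hexp₂ : 2 / α * -(α / γ) = -(2 / γ) := by field_simp
  rw [powerLaw, mul_rpow hk.le (by positivity), ← rpow_mul (by positivity), div_rpow hu hc.le,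
    mul_rpow hc.le (by positivity), ← rpow_mul (by positivity), hexp₁, hexp₂, rpow_neg hc.le,
    rpow_neg (by positivity), inv_rpow hk.le, inv_inv]
  field_simp

theorem min_mul_rpow_rpow_eq (hk : 0 < k) (hc : 0 < c) (hα : 0 < α) (γ : ℝ) {P : ℝ}
    (hP : 0 ≤ P) {r : ℝ} (hr : 0 ≤ r) :
    min P (k * r ^ α) ^ (2 / γ) = (c * k⁻¹ ^ (2 / α)) ^ (-(α / γ))
      * min (c * (P / k) ^ (2 / α)) (c * r ^ 2) ^ (α / γ) := by
  have hT : c * (P / k) ^ (2 / α) ∈ Ici 0 := mem_Ici.mpr (by positivity)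
  have hu : c * r ^ 2 ∈ Ici 0 := mem_Ici.mpr (by positivity)
  conv_lhs => rw [← powerLaw_mul_sq (k := k) (α := α) hc hr, ← powerLaw_mul_div_rpow hk hc hα hP]
  rw [← (powerLaw_monotoneOn hk.le hc hα.le).map_min hT hu,
    powerLaw_rpow hk hc hα γ (le_min hT hu)]

theorem rpow_neg_mul_rpow_mul_div_rpow (hk : 0 < k) (hc : 0 < c) (hα : 0 < α)
    (γ : ℝ) {P : ℝ} (hP : 0 ≤ P) :
    (c * k⁻¹ ^ (2 / α)) ^ (-(α / γ)) * (c * (P / k) ^ (2 / α)) ^ (α / γ) = P ^ (2 / γ) := by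
  rw [← powerLaw_rpow hk hc hα γ (by positivity), powerLaw_mul_div_rpow hk hc hα hP]

end powerLaw

theorem integral_withDensity_ofReal_ite_Ioi {f : ℝ → ℝ} (hf : Measurable f)
    (hf_nonneg : ∀ r, 0 < r → 0 ≤ f r) (g : ℝ → ℝ) :
    ∫ r, g r ∂(volume.withDensity fun r => ENNReal.ofReal (if 0 < r then f r else 0))
      = ∫ r in Ioi 0, f r * g r := by
  have hmeas : Measurable fun r : ℝ => (if 0 < r then f r else 0).toNNReal :=
    (Measurable.ite measurableSet_Ioi hf measurable_const).real_toNNReal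
  rw [← integral_indicator measurableSet_Ioi]
  refine (integral_withDensity_eq_integral_smul hmeas g).trans (integral_congr_ae (ae_of_all _ ?_))
  intro r
  by_cases hr : 0 < r
  · simp [hr, indicator_of_mem, NNReal.smul_def, hf_nonneg r hr]
  · simp [hr]

theorem integral_comp_mul_sq_Ioi (h : ℝ → ℝ) {c : ℝ} (hc : 0 < c) :
    ∫ r in Ioi 0, 2 * c * r * h (c * r ^ 2) = ∫ u in Ioi 0, h u := by
  have hsq := integral_comp_rpow_Ioi (fun y => h (c * y)) (two_ne_zero (α := ℝ))
  have hlin := integral_comp_mul_left_Ioi' h 0 hc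
  rw [mul_zero] at hlin
  rw [← hlin, ← hsq, smul_eq_mul, ← integral_const_mul]
  refine setIntegral_congr_fun measurableSet_Ioi fun r _ => ?_
  norm_num [smul_eq_mul]
  ring

theorem Gamma_sub_upperGamma {s : ℝ} (hs : 0 < s) {T : ℝ} (hT : 0 ≤ T) :
    Gamma s - upperGamma s T = ∫ u in Ioc 0 T, exp (-u) * u ^ (s - 1) := by
  have hint := GammaIntegral_convergent hs
  rw [Gamma_eq_integral hs, ← Ioc_union_Ioi_eq_Ioi hT,
    setIntegral_union Ioc_disjoint_Ioi_same measurableSet_Ioi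
      (hint.mono_set Ioc_subset_Ioi_self) (hint.mono_set (Ioi_subset_Ioi hT)), upperGamma]
  simp_rw [mul_comm (_ ^ _)]
  ring

theorem integral_exp_neg_mul_min_rpow {q : ℝ} (hq : -1 < q) {T : ℝ} (hT : 0 ≤ T) :
    ∫ u in Ioi 0, exp (-u) * min T u ^ q
      = Gamma (1 + q) - upperGamma (1 + q) T + T ^ q * exp (-T) := by
  have hs : 0 < 1 + q := by linarith
  have hGamma := GammaIntegral_convergent hs
  rw [add_sub_cancel_left] at hGamma
  have hlow : EqOn (fun u => exp (-u) * min T u ^ q) (fun u => exp (-u) * u ^ q) (Ioc 0 T) :=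
    fun u hu => by simp only [min_eq_right hu.2]
  have hhigh : EqOn (fun u => exp (-u) * min T u ^ q) (fun u => T ^ q * exp (-u)) (Ioi T) :=
    fun u hu => by simp only [min_eq_left (mem_Ioi.mp hu).le, mul_comm (exp _)]
  rw [← Ioc_union_Ioi_eq_Ioi hT, setIntegral_union Ioc_disjoint_Ioi_same measurableSet_Ioi,
    setIntegral_congr_fun measurableSet_Ioc hlow, setIntegral_congr_fun measurableSet_Ioi hhigh,
    integral_const_mul, integral_exp_neg_Ioi, Gamma_sub_upperGamma hs hT, add_sub_cancel_left]
  · exact (integrableOn_congr_fun hlow measurableSet_Ioc).mpr (hGamma.mono_set Ioc_subset_Ioi_self)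
  · refine (integrableOn_congr_fun hhigh measurableSet_Ioi).mpr ?_
    simpa [IntegrableOn] using (exp_neg_integrableOn_Ioi T one_pos).const_mul (T ^ q)

theorem d2d_power_moment_alphaD_general {Ω : Type*} [MeasurableSpace Ω]
    (μ : Measure Ω)
    (R : Ω → ℝ) (hR : Measurable R)
    (lamM : ℝ) (hlam : 0 < lamM)
    (hdist : Measure.map R μ = (volume : Measure ℝ).withDensity
      (fun r => ENNReal.ofReal
        (if 0 < r then 2 * Real.pi * lamM * r * Real.exp (-(Real.pi * lamM * r ^ 2)) else 0)))
    (PmaxD Ith β αM αD : ℝ) (hPmax : 0 < PmaxD) (hIth : 0 < Ith) (hβ : 0 < β)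
    (hαM : 0 < αM) (hαD : 0 < αD)
    (PD : Ω → ℝ) (hPD : ∀ ω, PD ω = min PmaxD ((Ith / β) * R ω ^ αM))
    (ϖ₀ : ℝ) (hϖ₀ : ϖ₀ = Real.pi * lamM * (β * PmaxD / Ith) ^ (2 / αM)) :
    ∫ ω, PD ω ^ (2 / αD) ∂μ
      = (Real.pi * lamM * (β / Ith) ^ (2 / αM)) ^ (-(αM / αD))
          * (Real.Gamma (1 + αM / αD) - upperGamma (1 + αM / αD) ϖ₀)
        + PmaxD ^ (2 / αD) * Real.exp (-ϖ₀) := by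
  have hc : 0 < π * lamM := by positivity
  have hk : 0 < Ith / β := by positivity
  rw [← inv_div Ith β]
  rw [show β * PmaxD / Ith = PmaxD / (Ith / β) by field_simp] at hϖ₀
  set A := (π * lamM * (Ith / β)⁻¹ ^ (2 / αM)) ^ (-(αM / αD))
  have hA : A * ϖ₀ ^ (αM / αD) = PmaxD ^ (2 / αD) := by
    rw [hϖ₀, rpow_neg_mul_rpow_mul_div_rpow hk hc hαM αD hPmax.le]
  calc ∫ ω, PD ω ^ (2 / αD) ∂μ
      = ∫ r in Ioi 0, 2 * π * lamM * r * exp (-(π * lamM * r ^ 2))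
          * min PmaxD (Ith / β * r ^ αM) ^ (2 / αD) := by
        simp_rw [hPD]
        rw [← integral_map (f := fun r => min PmaxD (Ith / β * r ^ αM) ^ (2 / αD))
            hR.aemeasurable (Measurable.aestronglyMeasurable (by fun_prop)), hdist,
          integral_withDensity_ofReal_ite_Ioi (by fun_prop) fun r hr => by positivity]
    _ = ∫ r in Ioi 0, 2 * (π * lamM) * r
          * (A * (exp (-(π * lamM * r ^ 2)) * min ϖ₀ (π * lamM * r ^ 2) ^ (αM / αD))) := by
        refine setIntegral_congr_fun measurableSet_Ioi fun r hr => ?_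
        rw [min_mul_rpow_rpow_eq hk hc hαM αD hPmax.le (le_of_lt hr), hϖ₀]
        ring
    _ = A * ∫ u in Ioi 0, exp (-u) * min ϖ₀ u ^ (αM / αD) := by
        rw [integral_comp_mul_sq_Ioi (fun u => A * (exp (-u) * min ϖ₀ u ^ (αM / αD))) hc,
          integral_const_mul]
    _ = _ := by
        rw [integral_exp_neg_mul_min_rpow (by linarith [div_pos hαM hαD]) (by rw [hϖ₀]; positivity),
          mul_add, ← mul_assoc, hA]

/-- The quantity `Ω₂` of equation (20) of the paper: with the Rayleigh nearest-distance density
and the D2D power control `P_D = min{P_max^D, (I_th/β)·R^{α_M}}`,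
`E[P_D^{2/α_D}] = (π λ_M (β/I_th)^{2/α_M})^{−α_M/α_D}·(Γ(1 + α_M/α_D) − Γ(1 + α_M/α_D, ϖ₀))
+ (P_max^D)^{2/α_D}·e^{−ϖ₀}`. -/
theorem d2d_power_moment_alphaD {Ω : Type*} [MeasurableSpace Ω]
    (μ : Measure Ω) [IsProbabilityMeasure μ]
    (R : Ω → ℝ) (hR : Measurable R)
    (lamM : ℝ) (hlam : 0 < lamM)
    (hdist : Measure.map R μ = (volume : Measure ℝ).withDensity
      (fun r => ENNReal.ofReal
        (if 0 < r then 2 * Real.pi * lamM * r * Real.exp (-(Real.pi * lamM * r ^ 2)) else 0)))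
    (PmaxD Ith β αM αD : ℝ) (hPmax : 0 < PmaxD) (hIth : 0 < Ith) (hβ : 0 < β)
    (hαM : 0 < αM) (hαD : 0 < αD)
    (PD : Ω → ℝ) (hPD : ∀ ω, PD ω = min PmaxD ((Ith / β) * R ω ^ αM))
    (ϖ₀ : ℝ) (hϖ₀ : ϖ₀ = Real.pi * lamM * (β * PmaxD / Ith) ^ (2 / αM)) :
    ∫ ω, PD ω ^ (2 / αD) ∂μ
      = (Real.pi * lamM * (β / Ith) ^ (2 / αM)) ^ (-(αM / αD))
          * (Real.Gamma (1 + αM / αD) - upperGamma (1 + αM / αD) ϖ₀)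
        + PmaxD ^ (2 / αD) * Real.exp (-ϖ₀) :=
  d2d_power_moment_alphaD_general μ R hR lamM hlam hdist PmaxD Ith β αM αD hPmax hIth hβ hαM hαD PD
    hPD ϖ₀ hϖ₀
end

section
/- Let R be a real random variable with density f_R(r) = 2π λ_M r exp(−π λ_M r²) for r > 0 (λ_M > 0), and define P_C = min{P_max^C, P_o β^{−η} R^{η α_M}} with P_o, P_max^C, β > 0, α_M > 0, η ∈ (0,1], and r_o = (P_max^C/P_o)^{1/(α_M η)} β^{1/α_M}. Then E[P_C] = P_o β^{−η} (π λ_M)^{−η α_M/2}·(Γ(1 + η α_M/2) − Γ(1 + η α_M/2, π λ_M r_o²)) + P_max^C·exp(−π λ_M r_o²), where Γ(s,T) = ∫_T^∞ u^{s−1} e^{−u} du is the upper incomplete Gamma function. -/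
/-!
Pushed forward along `R`, the mean power is the integral of the capped power law
`min (P_max^C) (P_o β^{-η} r^{η α_M})` against the Rayleigh density, and the cap is reached exactly
at `r_o`. On `(0, r_o]` the substitution `u = π λ_M r²` turns the integral into a truncated Gamma
integral; on `(r_o, ∞)` the power is constant and the density integrates to the tail probability
`exp (-π λ_M r_o²)`.
-/

open MeasureTheory Set

open Real Filter Topology

theorem setIntegral_Ioi_eq_Ioc_add_Ioi {f : ℝ → ℝ} {a b : ℝ} (hab : a ≤ b)
    (hfab : IntegrableOn f (Ioc a b)) (hfb : IntegrableOn f (Ioi b)) :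
    ∫ x in Ioi a, f x = (∫ x in Ioc a b, f x) + ∫ x in Ioi b, f x := by
  rw [← Ioc_union_Ioi_eq_Ioi hab,
    setIntegral_union (Ioc_disjoint_Ioi le_rfl) measurableSet_Ioi hfab hfb]

theorem integral_Ioc_rpow_mul_exp_neg {s T : ℝ} (hs : 0 < s) (hT : 0 ≤ T) :
    ∫ u in Ioc 0 T, u ^ (s - 1) * exp (-u) = Gamma s - upperGamma s T := by
  have hint : IntegrableOn (fun u => u ^ (s - 1) * exp (-u)) (Ioi 0) := by
    simpa only [mul_comm] using GammaIntegral_convergent hs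
  have hGamma : Gamma s = ∫ u in Ioi 0, u ^ (s - 1) * exp (-u) := by
    simp only [Gamma_eq_integral hs, mul_comm]
  rw [hGamma, upperGamma, setIntegral_Ioi_eq_Ioc_add_Ioi hT (hint.mono_set Ioc_subset_Ioi_self)
    (hint.mono_set (Ioi_subset_Ioi hT))]
  ring

/-- With `c = π λ_M`, the density of the distance to the nearest point of a planar Poisson point
process of intensity `λ_M`. -/
noncomputable def rayleighPDF (c r : ℝ) : ℝ := 2 * c * r * exp (-(c * r ^ 2))

section rayleighPDF

variable {c : ℝ}

theorem continuous_rayleighPDF (c : ℝ) : Continuous (rayleighPDF c) :=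
  show Continuous fun r => 2 * c * r * exp (-(c * r ^ 2)) by fun_prop

theorem rayleighPDF_nonneg (hc : 0 ≤ c) {r : ℝ} (hr : 0 ≤ r) : 0 ≤ rayleighPDF c r := by
  unfold rayleighPDF
  positivity

theorem hasDerivAt_neg_exp_neg_mul_sq (c x : ℝ) :
    HasDerivAt (fun r => -exp (-(c * r ^ 2))) (rayleighPDF c x) x := by
  have hsq : HasDerivAt (fun r => c * r ^ 2) (c * (2 * x)) x := by
    simpa using (hasDerivAt_pow 2 x).const_mul c
  refine hsq.neg.exp.neg.congr_deriv ?_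
  simp only [Pi.neg_apply, rayleighPDF]
  ring

theorem tendsto_neg_exp_neg_mul_sq_atTop (hc : 0 < c) :
    Tendsto (fun r => -exp (-(c * r ^ 2))) atTop (𝓝 0) := by
  have hsq : Tendsto (fun r : ℝ => c * r ^ 2) atTop atTop :=
    (tendsto_pow_atTop two_ne_zero).const_mul_atTop hc
  simpa using (tendsto_exp_neg_atTop_nhds_zero.comp hsq).neg

theorem integrableOn_Ioi_rayleighPDF (hc : 0 < c) {a : ℝ} (ha : 0 ≤ a) :
    IntegrableOn (rayleighPDF c) (Ioi a) :=
  integrableOn_Ioi_deriv_of_nonneg (by fun_prop) (fun x _ => hasDerivAt_neg_exp_neg_mul_sq c x)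
    (fun _ hx => rayleighPDF_nonneg hc.le (ha.trans hx.out.le))
    (tendsto_neg_exp_neg_mul_sq_atTop hc)

theorem integral_Ioi_rayleighPDF (hc : 0 < c) {a : ℝ} (ha : 0 ≤ a) :
    ∫ r in Ioi a, rayleighPDF c r = exp (-(c * a ^ 2)) := by
  rw [integral_Ioi_of_hasDerivAt_of_nonneg (by fun_prop)
    (fun x _ => hasDerivAt_neg_exp_neg_mul_sq c x)
    (fun _ hx => rayleighPDF_nonneg hc.le (ha.trans hx.out.le))
    (tendsto_neg_exp_neg_mul_sq_atTop hc)]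
  ring

theorem integral_Ioc_rayleighPDF_mul_rpow (hc : 0 < c) {p ρ : ℝ} (hp : 0 ≤ p) (hρ : 0 ≤ ρ) :
    ∫ r in Ioc 0 ρ, rayleighPDF c r * r ^ p
      = c ^ (-(p / 2)) * (Gamma (1 + p / 2) - upperGamma (1 + p / 2) (c * ρ ^ 2)) := by
  set g : ℝ → ℝ := fun u => (u / c) ^ (p / 2) * exp (-u)
  have hg : Continuous g :=
    ((continuous_id.div_const c).rpow_const fun _ => Or.inr (by positivity)).mul (by fun_prop)
  have hsq : ∀ x ∈ uIcc 0 ρ, HasDerivAt (fun r => c * r ^ 2) (2 * c * x) x := fun x _ => by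
    simpa [mul_comm, mul_left_comm, mul_assoc] using (hasDerivAt_pow 2 x).const_mul c
  have hintegrand : EqOn (fun r => rayleighPDF c r * r ^ p)
      (fun r => (g ∘ fun r => c * r ^ 2) r * (2 * c * r)) (uIcc 0 ρ) := by
    intro r hr
    have hr0 : 0 ≤ r := (uIcc_of_le hρ ▸ hr).1
    have hpow : (c * r ^ 2 / c) ^ (p / 2) = r ^ p := by
      rw [mul_div_cancel_left₀ _ hc.ne', ← rpow_natCast, ← rpow_mul hr0]
      congr 1
      push_cast
      ring
    simp only [g, Function.comp, hpow, rayleighPDF]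
    ring
  have hg_Ioc : EqOn g (fun u => c ^ (-(p / 2)) * (u ^ (1 + p / 2 - 1) * exp (-u)))
      (Ioc 0 (c * ρ ^ 2)) := by
    intro u hu
    simp only [g, div_rpow hu.1.le hc.le, rpow_neg hc.le, add_sub_cancel_left]
    ring
  rw [← intervalIntegral.integral_of_le hρ, intervalIntegral.integral_congr hintegrand,
    intervalIntegral.integral_comp_mul_deriv hsq (by fun_prop) hg, show c * (0 : ℝ) ^ 2 = 0 by ring,
    intervalIntegral.integral_of_le (by positivity), setIntegral_congr_fun measurableSet_Ioc hg_Ioc,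
    integral_const_mul, integral_Ioc_rpow_mul_exp_neg (by positivity) (by positivity)]

theorem integral_Ioi_rayleighPDF_mul_min_rpow (hc : 0 < c) {K p ρ : ℝ} (hK : 0 ≤ K) (hp : 0 ≤ p)
    (hρ : 0 ≤ ρ) :
    ∫ r in Ioi 0, rayleighPDF c r * min (K * ρ ^ p) (K * r ^ p)
      = K * c ^ (-(p / 2)) * (Gamma (1 + p / 2) - upperGamma (1 + p / 2) (c * ρ ^ 2))
        + K * ρ ^ p * exp (-(c * ρ ^ 2)) := by
  have hhead : EqOn (fun r => rayleighPDF c r * min (K * ρ ^ p) (K * r ^ p))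
      (fun r => K * (rayleighPDF c r * r ^ p)) (Ioc 0 ρ) := fun r hr => by
    dsimp only
    rw [min_eq_right (mul_le_mul_of_nonneg_left (rpow_le_rpow hr.1.le hr.2 hp) hK)]
    ring
  have htail : EqOn (fun r => rayleighPDF c r * min (K * ρ ^ p) (K * r ^ p))
      (fun r => K * ρ ^ p * rayleighPDF c r) (Ioi ρ) := fun r hr => by
    dsimp only
    rw [min_eq_left (mul_le_mul_of_nonneg_left (rpow_le_rpow hρ hr.out.le hp) hK)]
    ring
  have hcont : Continuous fun r => rayleighPDF c r * min (K * ρ ^ p) (K * r ^ p) :=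
    (continuous_rayleighPDF c).mul (continuous_const.min
      (continuous_const.mul (continuous_rpow_const hp)))
  have hint_tail : IntegrableOn (fun r => rayleighPDF c r * min (K * ρ ^ p) (K * r ^ p)) (Ioi ρ) :=
    IntegrableOn.congr_fun ((integrableOn_Ioi_rayleighPDF hc hρ).const_mul _) htail.symm
      measurableSet_Ioi
  rw [setIntegral_Ioi_eq_Ioc_add_Ioi hρ hcont.integrableOn_Ioc hint_tail,
    setIntegral_congr_fun measurableSet_Ioc hhead, setIntegral_congr_fun measurableSet_Ioi htail,
    integral_const_mul, integral_const_mul, integral_Ioc_rayleighPDF_mul_rpow hc hp hρ,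
    integral_Ioi_rayleighPDF hc hρ]
  ring

end rayleighPDF

theorem integral_comp_eq_setIntegral_Ioi_of_map_eq_withDensity {Ω : Type*} [MeasurableSpace Ω]
    {μ : Measure Ω} {R : Ω → ℝ} (hR : AEMeasurable R μ) {f g : ℝ → ℝ} (hf : Measurable f)
    (hf_nonneg : ∀ r, 0 < r → 0 ≤ f r) (hg : Measurable g)
    (hdist : μ.map R = volume.withDensity fun r => ENNReal.ofReal (if 0 < r then f r else 0)) :
    ∫ ω, g (R ω) ∂μ = ∫ r in Ioi 0, f r * g r := by
  rw [← integral_map hR hg.aestronglyMeasurable, hdist,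
    integral_withDensity_eq_integral_toReal_smul
      (Measurable.ite measurableSet_Ioi hf measurable_const).ennreal_ofReal
      (ae_of_all _ fun _ => ENNReal.ofReal_lt_top),
    ← integral_indicator measurableSet_Ioi]
  congr 1
  funext r
  by_cases hr : 0 < r
  · simp [hr, hf_nonneg r hr]
  · simp [hr]

theorem cellular_power_at_cutoff {Po PmaxC β αM η : ℝ} (hPo : 0 < Po) (hPmax : 0 < PmaxC)
    (hβ : 0 < β) (hαM : αM ≠ 0) (hη : η ≠ 0) :
    Po * β ^ (-η) * ((PmaxC / Po) ^ (1 / (αM * η)) * β ^ (1 / αM)) ^ (η * αM) = PmaxC := by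
  rw [mul_rpow (by positivity) (by positivity), ← rpow_mul (by positivity), ← rpow_mul hβ.le,
    show 1 / (αM * η) * (η * αM) = 1 by field_simp, show 1 / αM * (η * αM) = η by field_simp,
    rpow_one, rpow_neg hβ.le]
  field_simp

theorem average_cellular_power_general {Ω : Type*} [MeasurableSpace Ω]
    (μ : Measure Ω)
    (R : Ω → ℝ) (hR : Measurable R)
    (lamM : ℝ) (hlam : 0 < lamM)
    (hdist : Measure.map R μ = (volume : Measure ℝ).withDensity
      (fun r => ENNReal.ofReal
        (if 0 < r then 2 * Real.pi * lamM * r * Real.exp (-(Real.pi * lamM * r ^ 2)) else 0)))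
    (Po PmaxC β αM η : ℝ) (hPo : 0 < Po) (hPmax : 0 < PmaxC) (hβ : 0 < β) (hαM : 0 < αM)
    (hη : 0 < η)
    (PC : Ω → ℝ) (hPC : ∀ ω, PC ω = min PmaxC (Po * β ^ (-η) * R ω ^ (η * αM)))
    (ro : ℝ) (hro : ro = (PmaxC / Po) ^ (1 / (αM * η)) * β ^ (1 / αM)) :
    ∫ ω, PC ω ∂μ
      = Po * β ^ (-η) * (Real.pi * lamM) ^ (-(η * αM / 2))
          * (Real.Gamma (1 + η * αM / 2)
              - upperGamma (1 + η * αM / 2) (Real.pi * lamM * ro ^ 2))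
        + PmaxC * Real.exp (-(Real.pi * lamM * ro ^ 2)) := by
  have hcutoff : Po * β ^ (-η) * ro ^ (η * αM) = PmaxC :=
    hro ▸ cellular_power_at_cutoff hPo hPmax hβ hαM.ne' hη.ne'
  have hdist' : μ.map R = volume.withDensity
      fun r => ENNReal.ofReal (if 0 < r then rayleighPDF (π * lamM) r else 0) := by
    simp only [hdist, rayleighPDF, mul_assoc]
  have hpower : Measurable fun r => min PmaxC (Po * β ^ (-η) * r ^ (η * αM)) :=
    (continuous_const.min (continuous_const.mul (continuous_rpow_const (by positivity)))).measurable
  simp only [hPC]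
  rw [integral_comp_eq_setIntegral_Ioi_of_map_eq_withDensity hR.aemeasurable
      (continuous_rayleighPDF _).measurable (fun r hr => rayleighPDF_nonneg (by positivity) hr.le)
      hpower hdist', ← hcutoff,
    integral_Ioi_rayleighPDF_mul_min_rpow (by positivity) (by positivity) (by positivity)
      (by rw [hro]; positivity)]

/-- The average cellular transmit power, equation (14) of the paper: with the Rayleigh
nearest-distance density and the open-loop power control
`P_C = min{P_max^C, P_o β^{−η} R^{η α_M}}`, with `r_o = (P_max^C/P_o)^{1/(α_M η)} β^{1/α_M}`,
`E[P_C] = P_o β^{−η} (π λ_M)^{−η α_M/2}(Γ(1 + η α_M/2) − Γ(1 + η α_M/2, π λ_M r_o²))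
+ P_max^C exp(−π λ_M r_o²)`. -/
theorem average_cellular_power {Ω : Type*} [MeasurableSpace Ω]
    (μ : Measure Ω) [IsProbabilityMeasure μ]
    (R : Ω → ℝ) (hR : Measurable R)
    (lamM : ℝ) (hlam : 0 < lamM)
    (hdist : Measure.map R μ = (volume : Measure ℝ).withDensity
      (fun r => ENNReal.ofReal
        (if 0 < r then 2 * Real.pi * lamM * r * Real.exp (-(Real.pi * lamM * r ^ 2)) else 0)))
    (Po PmaxC β αM η : ℝ) (hPo : 0 < Po) (hPmax : 0 < PmaxC) (hβ : 0 < β) (hαM : 0 < αM)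
    (hη : 0 < η) (hη1 : η ≤ 1)
    (PC : Ω → ℝ) (hPC : ∀ ω, PC ω = min PmaxC (Po * β ^ (-η) * R ω ^ (η * αM)))
    (ro : ℝ) (hro : ro = (PmaxC / Po) ^ (1 / (αM * η)) * β ^ (1 / αM)) :
    ∫ ω, PC ω ∂μ
      = Po * β ^ (-η) * (Real.pi * lamM) ^ (-(η * αM / 2))
          * (Real.Gamma (1 + η * αM / 2)
              - upperGamma (1 + η * αM / 2) (Real.pi * lamM * ro ^ 2))
        + PmaxC * Real.exp (-(Real.pi * lamM * ro ^ 2)) :=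
  average_cellular_power_general μ R hR lamM hlam hdist Po PmaxC β αM η hPo hPmax hβ hαM hη PC hPC
    ro hro
end

section
/- For all λ > 0 and r_o > 0, ∫₀^{r_o} ln(x) · 2π λ x e^{−π λ x²} dx = −(1/2)·(γ + Γ(0, π λ r_o²) + 2 e^{−π λ r_o²} ln(r_o) + ln(π λ)), where γ is the Euler–Mascheroni constant and Γ(0,T) = ∫_T^∞ e^{−u}/u du. -/
/-!
Substituting `u = πλx²` turns the integral into `½ ∫₀^T (log u - log(πλ)) e^{-u} du` with
`T = πλ r_o²`. The part `∫₀^T e^{-u} du` is elementary. For `∫₀^T log u · e^{-u} du`, write it as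
`∫₀^∞ - ∫_T^∞`: the full integral is `Γ'(1) = -γ`, and integrating the tail by parts against
`-e^{-u}` gives `e^{-T} log T + Γ(0, T)`.
-/

open MeasureTheory Set intervalIntegral
open Filter Real Asymptotics

theorem integral_smul_comp_mul_sq {E : Type*} [NormedAddCommGroup E] [NormedSpace ℝ E]
    (c r : ℝ) (g : ℝ → E) :
    ∫ x in (0 : ℝ)..r, (2 * c * x) • g (c * x ^ 2) = ∫ u in (0 : ℝ)..c * r ^ 2, g u := by
  have hf : ContinuousOn (fun x => c * x ^ 2) (uIcc 0 r) := by fun_prop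
  have hf' : ∀ x ∈ Ioo (min 0 r) (max 0 r), HasDerivAt (fun x => c * x ^ 2) (2 * c * x) x :=
    fun x _ => by simpa [mul_comm, mul_assoc, mul_left_comm] using (hasDerivAt_pow 2 x).const_mul c
  have hxr : ∀ x ∈ Ioo (min 0 r) (max 0 r), 0 < x * r := by
    rintro x ⟨hx₁, hx₂⟩
    rcases le_total 0 r with hr | hr
    · rw [min_eq_left hr] at hx₁
      rw [max_eq_right hr] at hx₂
      exact mul_pos hx₁ (hx₁.trans hx₂)
    · rw [min_eq_right hr] at hx₁
      rw [max_eq_left hr] at hx₂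
      exact mul_pos_of_neg_of_neg hx₂ (hx₁.trans hx₂)
  -- `c * x` has the sign of `c * r` on the open interval, so `x ↦ c * x ^ 2` is monotone there.
  rcases le_total 0 (c * r) with hcr | hcr
  · have h : ∀ x ∈ Ioo (min 0 r) (max 0 r), 0 ≤ 2 * c * x := fun x hx => by
      nlinarith [hxr x hx, mul_nonneg hcr (sq_nonneg x)]
    simpa using integral_deriv_smul_comp_of_deriv_nonneg hf hf' h
  · have h : ∀ x ∈ Ioo (min 0 r) (max 0 r), 2 * c * x ≤ 0 := fun x hx => by
      nlinarith [hxr x hx, mul_nonpos_of_nonpos_of_nonneg hcr (sq_nonneg x)]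
    simpa using integral_deriv_smul_comp_of_deriv_nonpos hf hf' h

theorem isLittleO_log_mul_exp_neg :
    (fun t => log t * exp (-t)) =o[atTop] fun t => exp (-(1 / 2) * t) := by
  have h : log =o[atTop] fun t => exp (1 / 2 * t) :=
    isLittleO_log_id_atTop.trans
      ((isLittleO_pow_exp_pos_mul_atTop 1 one_half_pos).congr_left fun t => pow_one t)
  refine (h.mul_isBigO (isBigO_refl (fun t : ℝ => exp (-t)) atTop)).congr_right fun t => ?_
  rw [← exp_add]
  ring_nf

theorem tendsto_log_mul_exp_neg_atTop :
    Tendsto (fun t => log t * exp (-t)) atTop (nhds 0) :=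
  isLittleO_log_mul_exp_neg.trans_tendsto
    (tendsto_exp_atBot.comp (tendsto_id.const_mul_atTop_of_neg (by norm_num)))

theorem intervalIntegrable_log_mul_exp_neg (a b : ℝ) :
    IntervalIntegrable (fun t => log t * exp (-t)) volume a b :=
  intervalIntegrable_log'.mul_continuousOn (by fun_prop)

theorem integrableOn_log_mul_exp_neg_Ioi :
    IntegrableOn (fun t => log t * exp (-t)) (Ioi 0) := by
  rw [← Ioc_union_Ioi_eq_Ioi zero_le_one]
  refine IntegrableOn.union ?_ ?_
  · exact (intervalIntegrable_iff_integrableOn_Ioc_of_le zero_le_one).1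
      (intervalIntegrable_log_mul_exp_neg 0 1)
  · have hcont : ContinuousOn (fun t => log t * exp (-t)) (Ici 1) :=
      (continuousOn_log.mono fun t ht => (zero_lt_one.trans_le ht).ne').mul (by fun_prop)
    exact integrable_of_isBigO_exp_neg one_half_pos hcont isLittleO_log_mul_exp_neg.isBigO

-- `Γ'(1) = -γ`, while differentiating the Euler integral at `s = 1` gives `∫ log t · e^{-t}`.
theorem integral_log_mul_exp_neg_Ioi_zero :
    ∫ t in Ioi 0, log t * exp (-t) = -eulerMascheroniConstant := by
  have hGammaIntegral :
      HasDerivAt Complex.GammaIntegral (∫ t in Ioi 0, log t * exp (-t) : ℝ) 1 := by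
    convert Complex.hasDerivAt_GammaIntegral (s := 1) (by norm_num) using 1
    rw [← integral_complex_ofReal]
    refine setIntegral_congr_fun measurableSet_Ioi fun t _ => ?_
    simp
  have hGamma : Complex.Gamma =ᶠ[nhds 1] Complex.GammaIntegral := by
    filter_upwards [(isOpen_lt continuous_const Complex.continuous_re).mem_nhds
      (by simp : (0 : ℝ) < (1 : ℂ).re)] with s hs using Complex.Gamma_eq_integral hs
  exact_mod_cast (hGammaIntegral.congr_of_eventuallyEq hGamma).unique Complex.hasDerivAt_Gamma_one

theorem integrableOn_exp_neg_div_Ioi {T : ℝ} (hT : 0 < T) :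
    IntegrableOn (fun t => exp (-t) / t) (Ioi T) := by
  have hcont : ContinuousOn (fun t => exp (-t) / t) (Ici T) :=
    ContinuousOn.div (by fun_prop) continuousOn_id fun t ht => (hT.trans_le ht).ne'
  refine integrable_of_isBigO_exp_neg one_pos hcont ?_
  have h := (isBigO_refl (fun t : ℝ => exp (-t)) atTop).mul
    (tendsto_inv_atTop_zero.isBigO_one ℝ)
  simpa [div_eq_mul_inv] using h

theorem integral_log_mul_exp_neg_Ioi {T : ℝ} (hT : 0 < T) :
    ∫ t in Ioi T, log t * exp (-t) = exp (-T) * log T + ∫ t in Ioi T, exp (-t) / t := by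
  have hlog : ∀ t ∈ Ioi T, HasDerivAt log t⁻¹ t := fun t ht => hasDerivAt_log (hT.trans ht).ne'
  have hexp : ∀ t ∈ Ioi T, HasDerivAt (fun t => -exp (-t)) (exp (-t)) t := fun t _ => by
    simpa [Pi.neg_def] using (hasDerivAt_neg t).exp.neg
  have hparts := integral_Ioi_mul_deriv_eq_deriv_mul (b' := 0) hlog hexp
    (integrableOn_log_mul_exp_neg_Ioi.mono_set (Ioi_subset_Ioi hT.le))
    ((integrableOn_exp_neg_div_Ioi hT).neg.congr_fun
      (fun t _ => by simp [div_eq_inv_mul]) measurableSet_Ioi)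
    (((continuousAt_log hT.ne').mul (by fun_prop : ContinuousAt (fun t => -exp (-t)) T)).tendsto
      |>.mono_left nhdsWithin_le_nhds)
    (by simpa [Pi.mul_def] using tendsto_log_mul_exp_neg_atTop.neg)
  simp only [Pi.mul_apply, mul_neg, MeasureTheory.integral_neg, inv_mul_eq_div] at hparts
  rw [hparts]
  ring

theorem integral_log_mul_exp_neg {T : ℝ} (hT : 0 < T) :
    ∫ t in (0 : ℝ)..T, log t * exp (-t)
      = -eulerMascheroniConstant - exp (-T) * log T - ∫ t in Ioi T, exp (-t) / t := by
  rw [← integral_Ioi_sub_Ioi integrableOn_log_mul_exp_neg_Ioi hT.le,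
    integral_log_mul_exp_neg_Ioi_zero, integral_log_mul_exp_neg_Ioi hT]
  ring

theorem integral_exp_neg (a b : ℝ) : ∫ t in a..b, exp (-t) = exp (-a) - exp (-b) := by
  rw [intervalIntegral.integral_comp_neg (fun t => exp t), integral_exp]

/-- Truncated logarithmic moment of the Rayleigh density (Appendix C of the paper):
`∫₀^{r_o} ln(x)·2πλ x e^{−πλx²} dx
  = −(1/2)(γ + Γ(0, πλ r_o²) + 2 e^{−πλ r_o²} ln(r_o) + ln(πλ))`,
where `Γ(0,T) = ∫_T^∞ e^{−u}/u du`. -/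
theorem rayleigh_truncated_log_moment (lam ro : ℝ) (hlam : 0 < lam) (hro : 0 < ro) :
    ∫ x in (0:ℝ)..ro, Real.log x * (2 * Real.pi * lam * x * Real.exp (-(Real.pi * lam * x ^ 2)))
      = -(1 / 2) * (Real.eulerMascheroniConstant
          + (∫ u in Set.Ioi (Real.pi * lam * ro ^ 2), Real.exp (-u) / u)
          + 2 * Real.exp (-(Real.pi * lam * ro ^ 2)) * Real.log ro
          + Real.log (Real.pi * lam)) := by
  set c := π * lam
  have hc : 0 < c := by positivity
  have hsubst : ∫ x in (0 : ℝ)..ro, log x * (2 * π * lam * x * exp (-(c * x ^ 2)))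
      = (1 / 2) * ∫ u in (0 : ℝ)..c * ro ^ 2, (log u - log c) * exp (-u) := by
    rw [← integral_smul_comp_mul_sq, ← intervalIntegral.integral_const_mul]
    congr 1 with x
    rcases eq_or_ne x 0 with rfl | hx
    · simp
    · rw [smul_eq_mul, log_mul hc.ne' (pow_ne_zero 2 hx), log_pow]
      ring
  have hsplit : ∫ u in (0 : ℝ)..c * ro ^ 2, (log u - log c) * exp (-u)
      = (∫ u in (0 : ℝ)..c * ro ^ 2, log u * exp (-u))
        - log c * ∫ u in (0 : ℝ)..c * ro ^ 2, exp (-u) := by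
    simp only [sub_mul]
    rw [integral_sub (intervalIntegrable_log_mul_exp_neg _ _)
      ((by fun_prop : Continuous fun u => log c * exp (-u)).intervalIntegrable _ _),
      intervalIntegral.integral_const_mul]
  rw [hsubst, hsplit, integral_log_mul_exp_neg (by positivity), integral_exp_neg, neg_zero,
    exp_zero, log_mul hc.ne' (by positivity), log_pow]
  ring
end

section
/- For all real α > 2 and s > 0, ∫₀^∞ (1 − 1/(1 + s r^{−α})) · 2π r dr = π s^{2/α} Γ(1 + 2/α) Γ(1 − 2/α), where Γ is the Gamma function. -/
open MeasureTheory Set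

/-!
The interference factor is `1 - 1/(1 + s r^{-α}) = 1/(1 + r^α/s)`. Rescaling `r = s^{1/α} x` and
substituting `t = x^α` turns the radial integral into `(2π/α) s^{2/α}` times the Mellin transform
`∫₀^∞ t^{p-1}/(1+t) dt` at `p = 2/α`, and the substitution `t = x/(1-x)` identifies the latter with
the Beta integral `B(p, 1-p) = Γ(p) Γ(1-p)`.
-/

theorem intervalIntegral_rpow_mul_one_sub_rpow {u v : ℝ} (hu : 0 < u) (hv : 0 < v) :
    ∫ x in (0:ℝ)..1, x ^ (u - 1) * (1 - x) ^ (v - 1)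
      = Real.Gamma u * Real.Gamma v / Real.Gamma (u + v) := by
  apply Complex.ofReal_injective
  have hbeta := Complex.betaIntegral_eq_Gamma_mul_div u v (by simpa) (by simpa)
  rw [Complex.betaIntegral, ← Complex.ofReal_add, Complex.Gamma_ofReal, Complex.Gamma_ofReal,
    Complex.Gamma_ofReal] at hbeta
  push_cast
  rw [← hbeta, ← intervalIntegral.integral_ofReal]
  refine intervalIntegral.integral_congr fun x hx => ?_
  rw [uIcc_of_le zero_le_one] at hx
  push_cast [Complex.ofReal_cpow hx.1, Complex.ofReal_cpow (sub_nonneg.mpr hx.2)]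
  rfl

theorem image_div_one_sub_Ioo : (fun x : ℝ => x / (1 - x)) '' Ioo 0 1 = Ioi 0 := by
  ext t
  constructor
  · rintro ⟨x, ⟨hx0, hx1⟩, rfl⟩
    exact div_pos hx0 (sub_pos.mpr hx1)
  · intro ht
    have ht : 0 < t := ht
    refine ⟨t / (1 + t), ⟨by positivity, (div_lt_one (by positivity)).mpr (by linarith)⟩, ?_⟩
    field_simp
    ring

theorem injOn_div_one_sub_Ioo : InjOn (fun x : ℝ => x / (1 - x)) (Ioo 0 1) := by
  rintro a ⟨-, ha⟩ b ⟨-, hb⟩ h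
  have ha : 1 - a ≠ 0 := (sub_pos.mpr ha).ne'
  have hb : 1 - b ≠ 0 := (sub_pos.mpr hb).ne'
  field_simp at h
  linarith

theorem integral_Ioi_rpow_div_one_add {p : ℝ} (hp0 : 0 < p) (hp1 : p < 1) :
    ∫ t in Ioi (0:ℝ), t ^ (p - 1) / (1 + t) = Real.Gamma p * Real.Gamma (1 - p) := by
  have hderiv : ∀ x ∈ Ioo (0:ℝ) 1,
      HasDerivWithinAt (fun x : ℝ => x / (1 - x)) (((1 - x) ^ 2)⁻¹) (Ioo 0 1) x := by
    rintro x ⟨-, hx1⟩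
    have hx1 : 1 - x ≠ 0 := (sub_pos.mpr hx1).ne'
    refine ((hasDerivAt_id' x).div ((hasDerivAt_id' x).const_sub 1) hx1).hasDerivWithinAt
      |>.congr_deriv ?_
    field_simp
    ring
  rw [← image_div_one_sub_Ioo, integral_image_eq_integral_abs_deriv_smul measurableSet_Ioo hderiv
    injOn_div_one_sub_Ioo]
  calc ∫ x in Ioo (0:ℝ) 1, |((1 - x) ^ 2)⁻¹| • ((x / (1 - x)) ^ (p - 1) / (1 + x / (1 - x)))
      = ∫ x in Ioo (0:ℝ) 1, x ^ (p - 1) * (1 - x) ^ ((1 - p) - 1) := by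
        refine setIntegral_congr_fun measurableSet_Ioo fun x ⟨hx0, hx1⟩ => ?_
        have hx1 : 0 < 1 - x := sub_pos.mpr hx1
        have hpow : (1 - x) ^ ((1 - p) - 1) = ((1 - x) ^ (p - 1))⁻¹ * (1 - x)⁻¹ := by
          rw [← Real.rpow_neg hx1.le, ← Real.rpow_neg_one, ← Real.rpow_add hx1]
          ring_nf
        rw [smul_eq_mul, abs_of_pos (by positivity), Real.div_rpow hx0.le hx1.le, hpow]
        field_simp
        ring
    _ = Real.Gamma p * Real.Gamma (1 - p) := by
      rw [← integral_Ioc_eq_integral_Ioo, ← intervalIntegral.integral_of_le zero_le_one,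
        intervalIntegral_rpow_mul_one_sub_rpow hp0 (sub_pos.mpr hp1), add_sub_cancel,
        Real.Gamma_one, div_one]

theorem integral_Ioi_rpow_div_one_add_rpow {α β : ℝ} (hβ : 0 < β) (hβα : β < α) :
    ∫ x in Ioi (0:ℝ), x ^ (β - 1) / (1 + x ^ α)
      = α⁻¹ * (Real.Gamma (β / α) * Real.Gamma (1 - β / α)) := by
  have hα : 0 < α := hβ.trans hβα
  rw [← integral_Ioi_rpow_div_one_add (div_pos hβ hα) ((div_lt_one hα).mpr hβα),
    ← integral_comp_rpow_Ioi_of_pos (g := fun t => t ^ (β / α - 1) / (1 + t)) hα,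
    ← integral_const_mul]
  refine setIntegral_congr_fun measurableSet_Ioi fun x (hx : 0 < x) => ?_
  have hpow : x ^ (α - 1) * (x ^ α) ^ (β / α - 1) = x ^ (β - 1) := by
    rw [← Real.rpow_mul hx.le, ← Real.rpow_add hx]
    congr 1
    field_simp
    ring
  rw [smul_eq_mul, ← hpow]
  field_simp

theorem integral_Ioi_rpow_div_one_add_rpow_div {α β s : ℝ} (hβ : 0 < β) (hβα : β < α)
    (hs : 0 < s) :
    ∫ r in Ioi (0:ℝ), r ^ (β - 1) / (1 + r ^ α / s)
      = s ^ (β / α) * α⁻¹ * (Real.Gamma (β / α) * Real.Gamma (1 - β / α)) := by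
  have hα : 0 < α := hβ.trans hβα
  set c := s ^ α⁻¹
  have hc : 0 < c := by positivity
  have hcα : c ^ α = s := by rw [← Real.rpow_mul hs.le, inv_mul_cancel₀ hα.ne', Real.rpow_one]
  have hcβ : c ^ β = s ^ (β / α) := by rw [← Real.rpow_mul hs.le, inv_mul_eq_div]
  rw [← mul_zero c, ← integral_comp_mul_left_Ioi' _ _ hc, mul_assoc,
    ← integral_Ioi_rpow_div_one_add_rpow hβ hβα, ← hcβ, smul_eq_mul, ← integral_const_mul,
    ← integral_const_mul]
  refine setIntegral_congr_fun measurableSet_Ioi fun x (hx : 0 < x) => ?_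
  rw [Real.mul_rpow hc.le hx.le, Real.mul_rpow hc.le hx.le, hcα, Real.rpow_sub_one hc.ne']
  field_simp

/-- Radial part of the Laplace functional of Poisson-field interference with Rayleigh fading
(equations (27) and (18) of the paper): for `α > 2` and `s > 0`,
`∫₀^∞ (1 − 1/(1 + s r^{−α}))·2π r dr = π s^{2/α} Γ(1 + 2/α) Γ(1 − 2/α)`. -/
theorem poisson_interference_radial_integral (α s : ℝ) (hα : 2 < α) (hs : 0 < s) :
    ∫ r in Ioi (0:ℝ), (1 - 1 / (1 + s * r ^ (-α))) * (2 * Real.pi * r)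
      = Real.pi * s ^ (2 / α) * Real.Gamma (1 + 2 / α) * Real.Gamma (1 - 2 / α) := by
  have hintegrand : ∀ r ∈ Ioi (0:ℝ), (1 - 1 / (1 + s * r ^ (-α))) * (2 * Real.pi * r)
      = 2 * Real.pi * (r ^ ((2:ℝ) - 1) / (1 + r ^ α / s)) := by
    intro r (hr : 0 < r)
    have hrα : 0 < r ^ α := by positivity
    rw [Real.rpow_neg hr.le, show (2:ℝ) - 1 = 1 by norm_num, Real.rpow_one]
    field_simp
    ring
  rw [setIntegral_congr_fun measurableSet_Ioi hintegrand, integral_const_mul,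
    integral_Ioi_rpow_div_one_add_rpow_div two_pos hα hs, add_comm 1,
    Real.Gamma_add_one (by positivity)]
  ring
end

section
/- Let α > 2, t > 0, β > 0, and let P be a nonnegative real random variable with E[P^{2/α}] < ∞. Then ∫₀^∞ (1 − E[1/(1 + t P β r^{−α})]) · 2π r dr = π β^{2/α} E[P^{2/α}] Γ(1 + 2/α) Γ(1 − 2/α) t^{2/α}, where Γ is the Gamma function. -/
/-!
For a fixed power the radial integral is explicit. Substituting `u = r ^ α` turns
`∫₀^∞ (1 - 1 / (1 + c r^{-α})) 2πr dr` into `(2πc/α) ∫₀^∞ u^{2/α - 1} (u + c)⁻¹ du`, and this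
Beta integral equals `c^{2/α - 1} Γ(2/α) Γ(1 - 2/α)`: write `(u + c)⁻¹ = ∫₀^∞ e^{-(u + c) y} dy`
and integrate in `u` first, which leaves two Gamma integrals. With `c = t P β` the result is
linear in `P^{2/α}`, and since the integrand is nonnegative, Tonelli lets the expectation over
`P` be taken outside the radial integral.
-/

open MeasureTheory Set Real

theorem integral_integral_swap_of_nonneg_s12 {X Y : Type*} [MeasurableSpace X] [MeasurableSpace Y]
    {μ : Measure X} {ν : Measure Y} [SFinite μ] [SFinite ν] {f : X → Y → ℝ}
    (hf : AEStronglyMeasurable (Function.uncurry f) (μ.prod ν))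
    (hf_nonneg : ∀ᵐ x ∂μ, 0 ≤ᵐ[ν] f x) (hf_int : ∀ᵐ x ∂μ, Integrable (f x) ν)
    (hF_int : Integrable (fun x => ∫ y, f x y ∂ν) μ) :
    ∫ x, ∫ y, f x y ∂ν ∂μ = ∫ y, ∫ x, f x y ∂μ ∂ν := by
  refine integral_integral_swap ((integrable_prod_iff hf).2 ⟨hf_int, hF_int.congr ?_⟩)
  filter_upwards [hf_nonneg] with x hx
  exact integral_congr_ae (by filter_upwards [hx] with y hy using (norm_of_nonneg hy).symm)

theorem inv_eq_integral_exp_neg_mul_Ioi {a : ℝ} (ha : 0 < a) :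
    a⁻¹ = ∫ y in Ioi (0 : ℝ), exp (-a * y) := by
  rw [integral_exp_mul_Ioi (neg_neg_of_pos ha)]
  simp

theorem one_div_one_add_mem_Icc {x : ℝ} (hx : 0 ≤ x) : 1 / (1 + x) ∈ Icc (0 : ℝ) 1 :=
  ⟨by positivity, div_le_one_of_le₀ (by linarith) (by positivity)⟩

theorem integral_rpow_mul_inv_add_Ioi {s c : ℝ} (hs₀ : 0 < s) (hs₁ : s < 1) (hc : 0 < c) :
    ∫ u in Ioi (0 : ℝ), u ^ (s - 1) * (u + c)⁻¹ = c ^ (s - 1) * (Gamma s * Gamma (1 - s)) := by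
  set F : ℝ → ℝ → ℝ := fun y u => u ^ (s - 1) * exp (-(u + c) * y)
  have h_inner : ∀ u ∈ Ioi (0 : ℝ), u ^ (s - 1) * (u + c)⁻¹ = ∫ y in Ioi (0 : ℝ), F y u := by
    intro u hu
    rw [inv_eq_integral_exp_neg_mul_Ioi (by linarith [mem_Ioi.1 hu]), ← integral_const_mul]
  have h_outer : ∀ y ∈ Ioi (0 : ℝ),
      ∫ u in Ioi (0 : ℝ), F y u = Gamma s * (y ^ ((1 - s) - 1) * exp (-(c * y))) := by
    intro y hy
    have hy : 0 < y := hy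
    have hF : ∀ u, F y u = exp (-(c * y)) * (u ^ (s - 1) * exp (-(y * u))) := fun u => by
      dsimp only [F]
      rw [show -(u + c) * y = -(c * y) + -(y * u) by ring, exp_add]; ring
    simp_rw [hF]
    rw [integral_const_mul, integral_rpow_mul_exp_neg_mul_Ioi hs₀ hy, one_div,
      inv_rpow hy.le, ← rpow_neg hy.le]
    ring_nf
  have h_last : ∫ y in Ioi (0 : ℝ), Gamma s * (y ^ ((1 - s) - 1) * exp (-(c * y)))
      = c ^ (s - 1) * (Gamma s * Gamma (1 - s)) := by
    rw [integral_const_mul, integral_rpow_mul_exp_neg_mul_Ioi (by linarith) hc, one_div,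
      inv_rpow hc.le, ← rpow_neg hc.le, neg_sub]
    ring
  have h_pos : 0 < c ^ (s - 1) * (Gamma s * Gamma (1 - s)) := by
    have := Gamma_pos_of_pos hs₀; have := Gamma_pos_of_pos (sub_pos.2 hs₁); positivity
  rw [setIntegral_congr_fun measurableSet_Ioi h_inner, ← integral_integral_swap_of_nonneg_s12,
    setIntegral_congr_fun measurableSet_Ioi h_outer, h_last]
  · exact Measurable.aestronglyMeasurable (by fun_prop)
  · filter_upwards [ae_restrict_mem measurableSet_Ioi] with y hy
    filter_upwards [ae_restrict_mem measurableSet_Ioi] with u hu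
    have : (0 : ℝ) < u := hu
    positivity
  -- Integrability is free: the integrals computed above are nonzero, and a
  -- non-integrable function has Bochner integral `0`.
  · filter_upwards [ae_restrict_mem measurableSet_Ioi] with y hy
    refine Integrable.of_integral_ne_zero ?_
    rw [h_outer y hy]
    have := Gamma_pos_of_pos hs₀; have : (0 : ℝ) < y := hy
    positivity
  · refine (Integrable.of_integral_ne_zero (h_last ▸ h_pos.ne')).congr ?_
    filter_upwards [ae_restrict_mem measurableSet_Ioi] with y hy using (h_outer y hy).symm

theorem integral_Ioi_one_sub_one_div_one_add_mul_rpow_neg {c α : ℝ} (hc : 0 ≤ c) (hα : 2 < α) :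
    ∫ r in Ioi (0 : ℝ), (1 - 1 / (1 + c * r ^ (-α))) * (2 * π * r)
      = π * c ^ (2 / α) * Gamma (1 + 2 / α) * Gamma (1 - 2 / α) := by
  have hα₀ : 0 < α := by linarith
  rcases hc.eq_or_lt with rfl | hc
  · simp [zero_rpow (by positivity : 2 / α ≠ 0)]
  have h_subst : ∀ x ∈ Ioi (0 : ℝ), (1 / α * x ^ (1 / α - 1)) •
        ((1 - 1 / (1 + c * (x ^ (1 / α)) ^ (-α))) * (2 * π * x ^ (1 / α)))
      = 2 * π * c / α * (x ^ (2 / α - 1) * (x + c)⁻¹) := by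
    intro x hx
    have hx : 0 < x := hx
    rw [← rpow_mul hx.le, show 1 / α * -α = -1 by field_simp, rpow_neg_one,
      show 2 / α - 1 = (1 / α - 1) + 1 / α by ring, rpow_add hx, smul_eq_mul]
    field_simp
    ring
  rw [← integral_comp_rpow_Ioi_of_pos (p := 1 / α) (by positivity),
    setIntegral_congr_fun measurableSet_Ioi h_subst, integral_const_mul,
    integral_rpow_mul_inv_add_Ioi (by positivity) ((div_lt_one hα₀).2 hα) hc,
    add_comm 1, Gamma_add_one (by positivity), rpow_sub_one hc.ne']
  field_simp

theorem integrableOn_one_sub_one_div_one_add_mul_rpow_neg {c α : ℝ} (hc : 0 ≤ c) (hα : 2 < α) :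
    IntegrableOn (fun r => (1 - 1 / (1 + c * r ^ (-α))) * (2 * π * r)) (Ioi 0) := by
  rcases hc.eq_or_lt with rfl | hc
  · simp
  refine Integrable.of_integral_ne_zero ?_
  rw [integral_Ioi_one_sub_one_div_one_add_mul_rpow_neg hc.le hα]
  have := Gamma_pos_of_pos (s := 1 + 2 / α) (by positivity)
  have := Gamma_pos_of_pos (s := 1 - 2 / α) (by rw [sub_pos, div_lt_one (by linarith)]; exact hα)
  positivity

/-- Laplace-functional exponent of Poisson-field interference with random power-controlled
transmit powers (equations (10) and (17) of the paper): for `α > 2`, `t > 0`, `β > 0` and a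
nonnegative random power `P` with `E[P^{2/α}] < ∞`,
`∫₀^∞ (1 − E[1/(1 + t P β r^{−α})])·2π r dr
  = π β^{2/α} E[P^{2/α}] Γ(1 + 2/α) Γ(1 − 2/α) t^{2/α}`. -/
theorem poisson_interference_random_power {Ω : Type*} [MeasurableSpace Ω]
    (μ : Measure Ω) [IsProbabilityMeasure μ]
    (P : Ω → ℝ) (hP : Measurable P) (hPpos : ∀ ω, 0 ≤ P ω)
    (α t β : ℝ) (hα : 2 < α) (ht : 0 < t) (hβ : 0 < β)
    (hmom : Integrable (fun ω => P ω ^ (2 / α)) μ) :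
    ∫ r in Ioi (0:ℝ),
        (1 - ∫ ω, 1 / (1 + t * P ω * β * r ^ (-α)) ∂μ) * (2 * Real.pi * r)
      = Real.pi * β ^ (2 / α) * (∫ ω, P ω ^ (2 / α) ∂μ)
          * Real.Gamma (1 + 2 / α) * Real.Gamma (1 - 2 / α) * t ^ (2 / α) := by
  have hc : ∀ ω, 0 ≤ t * P ω * β := fun ω => by have := hPpos ω; positivity
  have h_exponent : ∀ ω, π * (t * P ω * β) ^ (2 / α) * Gamma (1 + 2 / α) * Gamma (1 - 2 / α)
      = (π * β ^ (2 / α) * Gamma (1 + 2 / α) * Gamma (1 - 2 / α) * t ^ (2 / α)) * P ω ^ (2 / α) :=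
    fun ω => by rw [mul_rpow (mul_nonneg ht.le (hPpos ω)) hβ.le, mul_rpow ht.le (hPpos ω)]; ring
  have h_mean : ∀ r ∈ Ioi (0 : ℝ),
      (1 - ∫ ω, 1 / (1 + t * P ω * β * r ^ (-α)) ∂μ) * (2 * π * r)
        = ∫ ω, (1 - 1 / (1 + t * P ω * β * r ^ (-α))) * (2 * π * r) ∂μ := by
    intro r hr
    have hr : 0 < r := hr
    have h_int : Integrable (fun ω => 1 / (1 + t * P ω * β * r ^ (-α))) μ :=
      .of_mem_Icc 0 1 (by fun_prop) (ae_of_all _ fun ω =>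
        one_div_one_add_mem_Icc (mul_nonneg (hc ω) (rpow_nonneg hr.le _)))
    rw [integral_mul_const, integral_sub (integrable_const 1) h_int, integral_const]
    simp
  rw [setIntegral_congr_fun measurableSet_Ioi h_mean, ← integral_integral_swap_of_nonneg_s12]
  · simp_rw [integral_Ioi_one_sub_one_div_one_add_mul_rpow_neg (hc _) hα, h_exponent]
    rw [integral_const_mul]
    ring
  · exact Measurable.aestronglyMeasurable (by fun_prop)
  · refine ae_of_all _ fun ω => ?_
    filter_upwards [ae_restrict_mem measurableSet_Ioi] with r hr
    have hr : 0 < r := hr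
    exact mul_nonneg
      (sub_nonneg.2 (one_div_one_add_mem_Icc (mul_nonneg (hc ω) (rpow_nonneg hr.le _))).2)
      (by positivity)
  · exact ae_of_all _ fun ω => integrableOn_one_sub_one_div_one_add_mul_rpow_neg (hc ω) hα
  · simp_rw [integral_Ioi_one_sub_one_div_one_add_mul_rpow_neg (hc _) hα, h_exponent]
    exact hmom.const_mul _
end

section
/- Let X and Y be independent real random variables on a probability space with X > 0 almost surely, Y ≥ 0 almost surely, ln X integrable, and Y integrable, and let σ² > 0. Then E[ln(1 + X/(Y + σ²))] ≥ ln(1 + e^{E[ln X]}/(E[Y] + σ²)). -/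
open MeasureTheory ProbabilityTheory

/-! With `Z = log X - log (Y + σ2)` the integrand is `softplus Z`, where
`softplus z = log (1 + exp z)` is convex (its derivative is the sigmoid) and increasing.
Jensen's inequality gives `E[softplus Z] ≥ softplus (E Z)`, and Jensen's inequality for the
concave `log` gives `E[log (Y + σ2)] ≤ log (E Y + σ2)`, hence
`E Z ≥ E[log X] - log (E Y + σ2)`. Applying `softplus` to this bound gives the right-hand side. -/

namespace Real

noncomputable def softplus (x : ℝ) : ℝ := log (1 + exp x)

lemma softplus_nonneg (x : ℝ) : 0 ≤ softplus x :=
  log_nonneg (le_add_of_nonneg_right (exp_pos x).le)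

lemma softplus_sub_log (x : ℝ) {b : ℝ} (hb : 0 < b) :
    softplus (x - log b) = log (1 + exp x / b) := by
  rw [softplus, exp_sub, exp_log hb]

lemma hasDerivAt_softplus (x : ℝ) : HasDerivAt softplus (sigmoid x) x := by
  have h : sigmoid x = exp x / (1 + exp x) := by
    rw [sigmoid, exp_neg]
    field_simp
    ring
  rw [h]
  exact ((hasDerivAt_exp x).const_add 1).log (by positivity)

lemma differentiable_softplus : Differentiable ℝ softplus :=
  fun x => (hasDerivAt_softplus x).differentiableAt

lemma deriv_softplus : deriv softplus = sigmoid :=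
  funext fun x => (hasDerivAt_softplus x).deriv

lemma continuous_softplus : Continuous softplus :=
  differentiable_softplus.continuous

lemma monotone_softplus : Monotone softplus :=
  fun _ _ hab => log_le_log (by positivity) (by gcongr)

lemma convexOn_softplus : ConvexOn ℝ Set.univ softplus :=
  Monotone.convexOn_univ_of_deriv differentiable_softplus (deriv_softplus ▸ sigmoid_monotone)

lemma softplus_le_log_two_add_abs (x : ℝ) : softplus x ≤ log 2 + |x| := by
  have h : 1 + exp x ≤ 2 * exp |x| := by
    linarith [exp_le_exp.2 (le_abs_self x), one_le_exp (abs_nonneg x)]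
  calc softplus x ≤ log (2 * exp |x|) := log_le_log (by positivity) h
    _ = log 2 + |x| := by rw [log_mul two_ne_zero (exp_pos _).ne', log_exp]

lemma log_add_le_log_add_div {a y : ℝ} (ha : 0 < a) (hy : 0 ≤ y) :
    log (y + a) ≤ log a + y / a := by
  have h := log_le_sub_one_of_pos (x := (y + a) / a) (by positivity)
  rw [log_div (by positivity) ha.ne', add_div, div_self ha.ne'] at h
  linarith

end Real

open Real

section Integrability

variable {Ω : Type*} [MeasurableSpace Ω] {μ : Measure Ω} [IsFiniteMeasure μ] {f : Ω → ℝ}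

lemma MeasureTheory.Integrable.softplus (hf : Integrable f μ) :
    Integrable (fun ω => softplus (f ω)) μ := by
  refine Integrable.mono' ((integrable_const (log 2)).add hf.abs)
    (continuous_softplus.comp_aestronglyMeasurable hf.aestronglyMeasurable) ?_
  refine ae_of_all _ fun ω => ?_
  rw [norm_of_nonneg (softplus_nonneg _)]
  exact softplus_le_log_two_add_abs _

lemma MeasureTheory.Integrable.log_add_const (hf : Integrable f μ) (hf0 : ∀ᵐ ω ∂μ, 0 ≤ f ω)
    {c : ℝ} (hc : 0 < c) : Integrable (fun ω => log (f ω + c)) μ := by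
  refine Integrable.mono' ((hf.div_const c).add (integrable_const |log c|))
    (measurable_log.comp_aemeasurable (hf.aemeasurable.add_const c)).aestronglyMeasurable ?_
  filter_upwards [hf0] with ω hω
  have hlow : log c ≤ log (f ω + c) := log_le_log hc (by linarith)
  rw [Pi.add_apply, norm_eq_abs, abs_le]
  constructor <;>
    linarith [neg_abs_le (log c), le_abs_self (log c), div_nonneg hω hc.le,
      log_add_le_log_add_div hc hω]

end Integrability

lemma integral_log_le_log_integral {Ω : Type*} [MeasurableSpace Ω] {μ : Measure Ω}
    [IsProbabilityMeasure μ] {f : Ω → ℝ} {c : ℝ} (hc : 0 < c) (hfc : ∀ᵐ ω ∂μ, c ≤ f ω)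
    (hf : Integrable f μ) (hlog : Integrable (fun ω => log (f ω)) μ) :
    ∫ ω, log (f ω) ∂μ ≤ log (∫ ω, f ω ∂μ) :=
  have hconcave : ConcaveOn ℝ (Set.Ici c) log :=
    strictConcaveOn_log_Ioi.concaveOn.subset (Set.Ici_subset_Ioi.2 hc) (convex_Ici c)
  hconcave.le_map_integral (continuousOn_log.mono fun _ hx => (hc.trans_le hx).ne')
    isClosed_Ici hfc hf hlog

theorem se_composite_lower_bound_general {Ω : Type*} [MeasurableSpace Ω]
    (μ : Measure Ω) [IsProbabilityMeasure μ]
    (X Y : Ω → ℝ)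
    (hXpos : ∀ᵐ ω ∂μ, 0 < X ω) (hYpos : ∀ᵐ ω ∂μ, 0 ≤ Y ω)
    (hlnX : Integrable (fun ω => Real.log (X ω)) μ) (hYint : Integrable Y μ)
    (σ2 : ℝ) (hσ : 0 < σ2) :
    ENNReal.ofReal (Real.log (1 + Real.exp (∫ ω, Real.log (X ω) ∂μ) / ((∫ ω, Y ω ∂μ) + σ2)))
      ≤ ∫⁻ ω, ENNReal.ofReal (Real.log (1 + X ω / (Y ω + σ2))) ∂μ := by
  set Z : Ω → ℝ := fun ω => log (X ω) - log (Y ω + σ2)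
  have hc : 0 < (∫ ω, Y ω ∂μ) + σ2 := add_pos_of_nonneg_of_pos (integral_nonneg_of_ae hYpos) hσ
  have hlogY : Integrable (fun ω => log (Y ω + σ2)) μ := hYint.log_add_const hYpos hσ
  have hZ : Integrable Z μ := hlnX.sub hlogY
  have hconcave : ∫ ω, log (Y ω + σ2) ∂μ ≤ log ((∫ ω, Y ω ∂μ) + σ2) := by
    have hYσ : ∀ᵐ ω ∂μ, σ2 ≤ Y ω + σ2 := by filter_upwards [hYpos] with ω hω; linarith
    simpa [integral_add hYint (integrable_const σ2)] using
      integral_log_le_log_integral hσ hYσ (hYint.add (integrable_const σ2)) hlogY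
  have hEZ : (∫ ω, log (X ω) ∂μ) - log ((∫ ω, Y ω ∂μ) + σ2) ≤ ∫ ω, Z ω ∂μ := by
    rw [integral_sub hlnX hlogY]
    linarith
  have hintegrand : (fun ω => ENNReal.ofReal (softplus (Z ω)))
      =ᵐ[μ] fun ω => ENNReal.ofReal (log (1 + X ω / (Y ω + σ2))) := by
    filter_upwards [hXpos, hYpos] with ω hx hy
    rw [softplus_sub_log _ (by linarith), exp_log hx]
  rw [← lintegral_congr_ae hintegrand,
    ← ofReal_integral_eq_lintegral_ofReal hZ.softplus (ae_of_all _ fun _ => softplus_nonneg _)]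
  gcongr
  calc log (1 + exp (∫ ω, log (X ω) ∂μ) / ((∫ ω, Y ω ∂μ) + σ2))
      = softplus ((∫ ω, log (X ω) ∂μ) - log ((∫ ω, Y ω ∂μ) + σ2)) := (softplus_sub_log _ hc).symm
    _ ≤ softplus (∫ ω, Z ω ∂μ) := monotone_softplus hEZ
    _ ≤ ∫ ω, softplus (Z ω) ∂μ :=
      convexOn_softplus.map_integral_le continuous_softplus.continuousOn isClosed_univ
        (ae_of_all _ fun _ => Set.mem_univ _) hZ hZ.softplus

/-- Composite lower bound on the ergodic spectral efficiency (Scale Properties 1 and 2 of the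
paper): for independent `X > 0` a.s. and `Y ≥ 0` a.s. with `ln X` and `Y` integrable, and
`σ² > 0`, `E[ln(1 + X/(Y + σ²))] ≥ ln(1 + e^{E[ln X]}/(E[Y] + σ²))`
(stated with the lower integral since the left side may be infinite). -/
theorem se_composite_lower_bound {Ω : Type*} [MeasurableSpace Ω]
    (μ : Measure Ω) [IsProbabilityMeasure μ]
    (X Y : Ω → ℝ) (hX : Measurable X) (hY : Measurable Y)
    (hXpos : ∀ᵐ ω ∂μ, 0 < X ω) (hYpos : ∀ᵐ ω ∂μ, 0 ≤ Y ω)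
    (hindep : IndepFun X Y μ)
    (hlnX : Integrable (fun ω => Real.log (X ω)) μ) (hYint : Integrable Y μ)
    (σ2 : ℝ) (hσ : 0 < σ2) :
    ENNReal.ofReal (Real.log (1 + Real.exp (∫ ω, Real.log (X ω) ∂μ) / ((∫ ω, Y ω ∂μ) + σ2)))
      ≤ ∫⁻ ω, ENNReal.ofReal (Real.log (1 + X ω / (Y ω + σ2))) ∂μ :=
  se_composite_lower_bound_general μ X Y hXpos hYpos hlnX hYint σ2 hσ
end

section
/- Let R be a real random variable with density f_R(r) = 2π λ_M r exp(−π λ_M r²) for r > 0 (λ_M > 0), let D_o, I_th, β, P_max^D > 0 and α_M > 0, and define P' = (I_th/β)·(max(D_o, R))^{α_M}. Then E[min{P_max^D, P'}] = ∫₀^{P_max^D} ( 𝟙{x < D_o^{α_M} I_th/β}·(1 − exp(−π λ_M D_o²)) + exp(−π λ_M (ϖ₁(x))²) ) dx, where ϖ₁(x) = max{D_o, (β x / I_th)^{1/α_M}}. -/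
/-!
By the layer-cake formula, `E[min(P, Y)] = ∫₀^P P(Y > x) dx` for `Y ≥ 0`. Writing
`ϖ = (β x / I_th)^(1/α_M)`, the event `P' > x` is `max(D_o, R) > ϖ`: it is certain when `ϖ < D_o`,
and otherwise it is `R > ϖ`, whose probability is the Rayleigh tail `exp(-π λ_M ϖ²)`. In both cases
this is the integrand of the claim, since its two summands add up to `1` when `ϖ < D_o`.
-/

open MeasureTheory Set intervalIntegral Real Filter Topology

theorem integrable_const_mul_mul_exp_neg_mul_sq {c : ℝ} (hc : 0 < c) (a : ℝ) :
    Integrable fun r => a * r * exp (-(c * r ^ 2)) := by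
  simpa only [neg_mul, mul_assoc] using (integrable_mul_exp_neg_mul_sq hc).const_mul a

theorem integral_Ioi_mul_exp_neg_mul_sq {c : ℝ} (hc : 0 < c) (w : ℝ) :
    ∫ r in Ioi w, 2 * c * r * exp (-(c * r ^ 2)) = exp (-(c * w ^ 2)) := by
  have hderiv : ∀ r ∈ Ici w,
      HasDerivAt (fun r => -exp (-(c * r ^ 2))) (2 * c * r * exp (-(c * r ^ 2))) r := by
    intro r _
    refine (((hasDerivAt_pow 2 r).const_mul c).fun_neg.exp).fun_neg.congr_deriv ?_
    norm_num
    ring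
  have hlim : Tendsto (fun r => -exp (-(c * r ^ 2))) atTop (𝓝 0) := by
    simpa using (tendsto_exp_atBot.comp <| tendsto_neg_atTop_atBot.comp <|
      (tendsto_pow_atTop two_ne_zero).const_mul_atTop hc).neg
  rw [integral_Ioi_of_hasDerivAt_of_tendsto' hderiv
    (integrable_const_mul_mul_exp_neg_mul_sq hc _).integrableOn hlim]
  ring

/-- The law of the distance to the nearest point of a planar Poisson process of intensity
`c / π`; the paper's `R` has law `rayleighMeasure (π * λ_M)`. -/
noncomputable def rayleighMeasure (c : ℝ) : Measure ℝ :=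
  volume.withDensity fun r => ENNReal.ofReal (if 0 < r then 2 * c * r * exp (-(c * r ^ 2)) else 0)

theorem rayleighMeasure_Ioi {c : ℝ} (hc : 0 < c) {w : ℝ} (hw : 0 ≤ w) :
    rayleighMeasure c (Ioi w) = ENNReal.ofReal (exp (-(c * w ^ 2))) := by
  rw [rayleighMeasure, withDensity_apply _ measurableSet_Ioi,
    setLIntegral_congr_fun measurableSet_Ioi fun r (hr : w < r) => by rw [if_pos (hw.trans_lt hr)],
    ← ofReal_integral_eq_lintegral_ofReal, integral_Ioi_mul_exp_neg_mul_sq hc]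
  · exact (integrable_const_mul_mul_exp_neg_mul_sq hc _).integrableOn
  · filter_upwards [ae_restrict_mem measurableSet_Ioi] with r (hr : w < r)
    have : 0 ≤ r := hw.trans hr.le
    positivity

theorem measureReal_lt_max {ν : Measure ℝ} [IsProbabilityMeasure ν] (a w : ℝ) :
    ν.real {r | w < max a r} = if w < a then 1 else ν.real (Ioi w) := by
  split_ifs with h
  · simp [h]
  · simp [h, Ioi]

theorem lt_mul_rpow_iff {k t m α : ℝ} (hk : 0 < k) (ht : 0 ≤ t) (hm : 0 ≤ m) (hα : 0 < α) :
    t < k * m ^ α ↔ (t / k) ^ (1 / α) < m := by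
  rw [one_div, rpow_inv_lt_iff_of_pos (div_nonneg ht hk.le) hm hα, div_lt_iff₀' hk]

theorem integral_min_eq_intervalIntegral_measureReal_lt {Ω : Type*} [MeasurableSpace Ω]
    {μ : Measure Ω} [IsFiniteMeasure μ] {X : Ω → ℝ} (hX : AEMeasurable X μ) (hX0 : 0 ≤ᵐ[μ] X)
    {c : ℝ} (hc : 0 ≤ c) :
    ∫ ω, min c (X ω) ∂μ = ∫ t in 0..c, μ.real {ω | t < X ω} := by
  have hnn : 0 ≤ᵐ[μ] fun ω => min c (X ω) := hX0.mono fun ω hω => le_min hc hω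
  have hint : Integrable (fun ω => min c (X ω)) μ := by
    refine (integrable_const c).mono' (aemeasurable_const.min hX).aestronglyMeasurable ?_
    filter_upwards [hnn] with ω hω
    rw [Real.norm_eq_abs, abs_of_nonneg hω]
    exact min_le_left _ _
  have htail : ∀ t, μ.real {ω | t < min c (X ω)} =
      (Iio c).indicator (fun t => μ.real {ω | t < X ω}) t := fun t => by
    by_cases htc : t < c <;> simp [htc]
  rw [hint.integral_eq_integral_meas_lt hnn]
  simp_rw [htail]
  rw [setIntegral_indicator measurableSet_Iio, Ioi_inter_Iio, integral_of_le hc,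
    integral_Ioc_eq_integral_Ioo]

/-- The average D2D transmit power `P̄_D` of equation (15) of the paper: with the Rayleigh
nearest-distance density, reference distance `D_o` and `P' = (I_th/β)·(max(D_o, R))^{α_M}`,
`E[min{P_max^D, P'}] = ∫₀^{P_max^D} ( 𝟙{x < D_o^{α_M} I_th/β}(1 − e^{−π λ_M D_o²})
  + e^{−π λ_M ϖ₁(x)²} ) dx`, where `ϖ₁(x) = max{D_o, (β x/I_th)^{1/α_M}}`. -/
theorem average_d2d_power {Ω : Type*} [MeasurableSpace Ω]
    (μ : Measure Ω) [IsProbabilityMeasure μ]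
    (R : Ω → ℝ) (hR : Measurable R)
    (lamM : ℝ) (hlam : 0 < lamM)
    (hdist : Measure.map R μ = (volume : Measure ℝ).withDensity
      (fun r => ENNReal.ofReal
        (if 0 < r then 2 * Real.pi * lamM * r * Real.exp (-(Real.pi * lamM * r ^ 2)) else 0)))
    (Do Ith β PmaxD αM : ℝ) (hDo : 0 < Do) (hIth : 0 < Ith) (hβ : 0 < β)
    (hPmax : 0 < PmaxD) (hαM : 0 < αM)
    (P' : Ω → ℝ) (hP' : ∀ ω, P' ω = (Ith / β) * max Do (R ω) ^ αM) :
    ∫ ω, min PmaxD (P' ω) ∂μ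
      = ∫ x in (0:ℝ)..PmaxD,
          ((if x < Do ^ αM * Ith / β then 1 - Real.exp (-(Real.pi * lamM * Do ^ 2)) else 0)
            + Real.exp (-(Real.pi * lamM * (max Do ((β * x / Ith) ^ (1 / αM))) ^ 2))) := by
  have hlaw : μ.map R = rayleighMeasure (π * lamM) := by
    simp_rw [hdist, rayleighMeasure, mul_assoc]
  have : IsProbabilityMeasure (μ.map R) := Measure.isProbabilityMeasure_map hR.aemeasurable
  have hP'nn : ∀ ω, 0 ≤ P' ω := fun ω => by rw [hP']; positivity
  have hP'meas : Measurable P' := by rw [funext hP']; fun_prop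
  rw [integral_min_eq_intervalIntegral_measureReal_lt hP'meas.aemeasurable (ae_of_all _ hP'nn)
    hPmax.le]
  refine integral_congr fun t ht => ?_
  have ht0 : 0 ≤ t := (uIcc_of_le hPmax.le ▸ ht).1
  set w := (β * t / Ith) ^ (1 / αM)
  have hthreshold : ∀ m, 0 ≤ m → (t < Ith / β * m ^ αM ↔ w < m) := fun m hm => by
    rw [lt_mul_rpow_iff (by positivity) ht0 hm hαM, div_div_eq_mul_div, mul_comm t]
  have hevent : {ω | t < P' ω} = R ⁻¹' {r | w < max Do r} := by
    ext ω
    simp only [mem_ofPred_eq, mem_preimage, hP', hthreshold _ (hDo.le.trans (le_max_left _ _))]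
  have hcond : t < Do ^ αM * Ith / β ↔ w < Do := by
    rw [← hthreshold Do hDo.le, mul_div_assoc, mul_comm]
  rw [hevent, ← map_measureReal_apply hR (measurableSet_lt measurable_const (by fun_prop)),
    measureReal_lt_max]
  simp only [hcond]
  split_ifs with hw
  · rw [max_eq_left hw.le]
    ring
  · rw [max_eq_right (not_lt.1 hw), hlaw, measureReal_def,
      rayleighMeasure_Ioi (by positivity) (hDo.le.trans (not_lt.1 hw)),
      ENNReal.toReal_ofReal (exp_nonneg _), zero_add]
end

section
/- Let R be a real random variable with density f_R(r) = 2π λ_M r exp(−π λ_M r²) for r > 0 (λ_M > 0), let P_D = min{P_max^D, (I_th/β)·R^{α_M}} with P_max^D, I_th, β > 0, α_M > 0, and let t > 0, d_o > 0, α_D > 0, ϖ₀ = π λ_M (β P_max^D/I_th)^{2/α_M}. Then E[ 1/(1 + t P_D β d_o^{−α_D}) ] = ∫₀^{ϖ₀} e^{−x} / (1 + t I_th (x/(π λ_M))^{α_M/2} d_o^{−α_D}) dx + e^{−ϖ₀} / (1 + t P_max^D β d_o^{−α_D}). -/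
/-!
If `R` has the nearest-distance density of a Poisson process of intensity `λ_M`, then
`X = π λ_M R²` is a unit exponential variable, so the expectation is `∫₀^∞ e^{-x} h(x) dx`
where `h` is the Laplace transform written as a function of `X`. The power cap `P_D = P_max^D`
is active exactly when `X > ϖ₀`; there `h` is constant and `∫_{ϖ₀}^∞ e^{-x} dx = e^{-ϖ₀}`.
-/

open MeasureTheory Set intervalIntegral

theorem integral_comp_eq_integral_mul_of_map_eq_withDensity {Ω α : Type*} [MeasurableSpace Ω]
    [MeasurableSpace α] {μ : Measure Ω} {ν : Measure α} {X : Ω → α} (hX : Measurable X)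
    {ρ : α → ℝ} (hρ : Measurable ρ) (hρ_nonneg : ∀ a, 0 ≤ ρ a)
    (hmap : μ.map X = ν.withDensity fun a => ENNReal.ofReal (ρ a))
    {g : α → ℝ} (hg : Measurable g) :
    ∫ ω, g (X ω) ∂μ = ∫ a, ρ a * g a ∂ν := by
  rw [← integral_map hX.aemeasurable hg.aestronglyMeasurable, hmap]
  exact (integral_withDensity_eq_integral_toReal_smul₀ hρ.ennreal_ofReal.aemeasurable
    (by simp) g).trans (by simp [ENNReal.toReal_ofReal, hρ_nonneg])

theorem integral_Ioi_comp_const_mul_sq {c : ℝ} (hc : 0 < c) (g : ℝ → ℝ) :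
    ∫ r in Ioi 0, 2 * c * r * g (c * r ^ 2) = ∫ x in Ioi 0, g x := by
  have himage : (fun r => c * r ^ 2) '' Ioi 0 = Ioi 0 := by
    ext x
    constructor
    · rintro ⟨r, hr, rfl⟩
      exact mul_pos hc (pow_pos hr 2)
    · intro hx
      refine ⟨√(x / c), Real.sqrt_pos.2 (div_pos hx hc), ?_⟩
      simp only [Real.sq_sqrt (div_pos hx hc).le]
      field_simp
  have hinj : InjOn (fun r : ℝ => c * r ^ 2) (Ioi 0) := fun a ha b hb h =>
    (pow_left_strictMonoOn₀ two_ne_zero).injOn (le_of_lt ha) (le_of_lt hb)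
      (mul_left_cancel₀ hc.ne' h)
  conv_rhs => rw [← himage, integral_image_eq_integral_abs_deriv_smul measurableSet_Ioi
    (fun r _ => ((hasDerivAt_pow 2 r).const_mul c).hasDerivWithinAt) hinj]
  refine setIntegral_congr_fun measurableSet_Ioi fun r (hr : 0 < r) => ?_
  rw [abs_of_pos (by positivity), smul_eq_mul]
  ring

noncomputable def nearestDistancePDF (lam r : ℝ) : ℝ :=
  if 0 < r then 2 * Real.pi * lam * r * Real.exp (-(Real.pi * lam * r ^ 2)) else 0

theorem integral_comp_eq_integral_exp_neg_of_map_eq_nearestDistance {Ω : Type*}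
    [MeasurableSpace Ω] {μ : Measure Ω} {R : Ω → ℝ} (hR : Measurable R) {lam : ℝ} (hlam : 0 < lam)
    (hmap : μ.map R = volume.withDensity fun r => ENNReal.ofReal (nearestDistancePDF lam r))
    {g : ℝ → ℝ} (hg : Measurable g) :
    ∫ ω, g (R ω) ∂μ = ∫ x in Ioi 0, Real.exp (-x) * g √(x / (Real.pi * lam)) := by
  have hc : 0 < Real.pi * lam := mul_pos Real.pi_pos hlam
  have hpdf : Measurable (nearestDistancePDF lam) :=
    Measurable.ite measurableSet_Ioi (by fun_prop) measurable_const
  have hpdf_nonneg : ∀ r, 0 ≤ nearestDistancePDF lam r := fun r => by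
    unfold nearestDistancePDF; split_ifs <;> positivity
  rw [integral_comp_eq_integral_mul_of_map_eq_withDensity hR hpdf hpdf_nonneg hmap hg,
    ← setIntegral_eq_integral_of_forall_compl_eq_zero fun r (hr : ¬ 0 < r) => by
      simp [nearestDistancePDF, hr],
    ← integral_Ioi_comp_const_mul_sq hc]
  refine setIntegral_congr_fun measurableSet_Ioi fun r (hr : 0 < r) => ?_
  rw [nearestDistancePDF, if_pos hr, mul_div_cancel_left₀ _ hc.ne', Real.sqrt_sq hr.le]
  ring

theorem integral_Ioi_exp_neg_mul_eq_of_eqOn_Ioi {h : ℝ → ℝ} {a K M : ℝ} (ha : 0 ≤ a)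
    (hh : Measurable h) (hbound : ∀ x ∈ Ioc 0 a, ‖h x‖ ≤ M) (hconst : EqOn h (fun _ => K) (Ioi a)) :
    ∫ x in Ioi 0, Real.exp (-x) * h x
      = (∫ x in 0..a, Real.exp (-x) * h x) + Real.exp (-a) * K := by
  have hint_tail : IntegrableOn (fun x => Real.exp (-x) * h x) (Ioi a) :=
    IntegrableOn.congr_fun ((integrableOn_exp_neg_Ioi a).mul_const K)
      (fun x hx => by simp [hconst hx]) measurableSet_Ioi
  have hint_head : IntegrableOn (fun x => Real.exp (-x) * h x) (Ioc 0 a) := by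
    refine Measure.integrableOn_of_bounded (M := M) measure_Ioc_lt_top.ne (by fun_prop) ?_
    refine (ae_restrict_iff' measurableSet_Ioc).2 (ae_of_all _ fun x hx => ?_)
    rw [norm_mul, Real.norm_of_nonneg (Real.exp_pos _).le]
    exact (mul_le_mul (Real.exp_le_one_iff.2 (by linarith [hx.1])) (hbound x hx)
      (norm_nonneg _) zero_le_one).trans_eq (one_mul M)
  rw [← Ioc_union_Ioi_eq_Ioi ha, setIntegral_union (Ioc_disjoint_Ioi le_rfl) measurableSet_Ioi
    hint_head hint_tail, integral_of_le ha, setIntegral_congr_fun (g := fun x => Real.exp (-x) * K)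
    measurableSet_Ioi (fun x hx => by simp only [hconst hx]), MeasureTheory.integral_mul_const,
    integral_exp_neg_Ioi]

theorem mul_div_rpow_le_iff {a b P p x : ℝ} (ha : 0 < a) (hb : 0 < b) (hP : 0 ≤ P) (hp : 0 < p)
    (hx : 0 ≤ x) : a * (x / b) ^ p ≤ P ↔ x ≤ b * (P / a) ^ p⁻¹ := by
  rw [← le_div_iff₀' ha, ← div_le_iff₀' hb,
    Real.le_rpow_inv_iff_of_pos (div_nonneg hx hb.le) (div_nonneg hP ha.le) hp]

theorem d2d_signal_laplace_general {Ω : Type*} [MeasurableSpace Ω]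
    (μ : Measure Ω)
    (R : Ω → ℝ) (hR : Measurable R)
    (lamM : ℝ) (hlam : 0 < lamM)
    (hdist : Measure.map R μ = (volume : Measure ℝ).withDensity
      (fun r => ENNReal.ofReal
        (if 0 < r then 2 * Real.pi * lamM * r * Real.exp (-(Real.pi * lamM * r ^ 2)) else 0)))
    (PmaxD Ith β αM : ℝ) (hPmax : 0 < PmaxD) (hIth : 0 < Ith) (hβ : 0 < β) (hαM : 0 < αM)
    (PD : Ω → ℝ) (hPD : ∀ ω, PD ω = min PmaxD ((Ith / β) * R ω ^ αM))
    (t do_ αD : ℝ) (ht : 0 < t) (hdo : 0 < do_)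
    (ϖ₀ : ℝ) (hϖ₀ : ϖ₀ = Real.pi * lamM * (β * PmaxD / Ith) ^ (2 / αM)) :
    ∫ ω, 1 / (1 + t * PD ω * β * do_ ^ (-αD)) ∂μ
      = (∫ x in (0:ℝ)..ϖ₀,
          Real.exp (-x) / (1 + t * Ith * (x / (Real.pi * lamM)) ^ (αM / 2) * do_ ^ (-αD)))
        + Real.exp (-ϖ₀) / (1 + t * PmaxD * β * do_ ^ (-αD)) := by
  set q := do_ ^ (-αD)
  set c := Real.pi * lamM
  have hc : 0 < c := mul_pos Real.pi_pos hlam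
  set g : ℝ → ℝ := fun r => 1 / (1 + t * min PmaxD (Ith / β * r ^ αM) * β * q)
  have hg : Measurable g := by fun_prop
  have hg_norm : ∀ r, 0 ≤ r → ‖g r‖ ≤ 1 := fun r hr => by
    have : 0 ≤ t * min PmaxD (Ith / β * r ^ αM) * β * q := by positivity
    rw [Real.norm_of_nonneg (by positivity)]
    exact div_le_one_of_le₀ (by linarith) (by linarith)
  have hsqrt_rpow : ∀ x, 0 ≤ x → √(x / c) ^ αM = (x / c) ^ (αM / 2) := fun x hx => by
    rw [Real.sqrt_eq_rpow, ← Real.rpow_mul (div_nonneg hx hc.le), one_div_mul_eq_div]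
  have hthreshold : ∀ x, 0 ≤ x → (Ith / β * √(x / c) ^ αM ≤ PmaxD ↔ x ≤ ϖ₀) := fun x hx => by
    rw [hsqrt_rpow x hx, mul_div_rpow_le_iff (by positivity) hc hPmax.le (by positivity) hx,
      inv_div, hϖ₀, div_div_eq_mul_div, mul_comm β PmaxD]
  have hϖ₀_nonneg : 0 ≤ ϖ₀ := by rw [hϖ₀]; positivity
  have hhead : ∀ x ∈ Ioc 0 ϖ₀, ‖g √(x / c)‖ ≤ 1 := fun x _ => hg_norm _ (Real.sqrt_nonneg _)
  have htail : EqOn (fun x => g √(x / c)) (fun _ => 1 / (1 + t * PmaxD * β * q)) (Ioi ϖ₀) :=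
    fun x (hx : ϖ₀ < x) => by
      have hcap : PmaxD ≤ Ith / β * √(x / c) ^ αM :=
        le_of_not_ge fun hle => hx.not_ge ((hthreshold x (hϖ₀_nonneg.trans hx.le)).1 hle)
      simp only [g, min_eq_left hcap]
  calc ∫ ω, 1 / (1 + t * PD ω * β * q) ∂μ = ∫ ω, g (R ω) ∂μ := by simp only [g, hPD]
    _ = ∫ x in Ioi 0, Real.exp (-x) * g √(x / c) :=
      integral_comp_eq_integral_exp_neg_of_map_eq_nearestDistance hR hlam hdist hg
    _ = (∫ x in 0..ϖ₀, Real.exp (-x) * g √(x / c))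
          + Real.exp (-ϖ₀) * (1 / (1 + t * PmaxD * β * q)) :=
      integral_Ioi_exp_neg_mul_eq_of_eqOn_Ioi hϖ₀_nonneg (by fun_prop) hhead htail
    _ = _ := by
      rw [mul_one_div]
      congr 1
      refine integral_congr fun x hx => ?_
      rw [uIcc_of_le hϖ₀_nonneg] at hx
      dsimp only [g]
      rw [min_eq_right ((hthreshold x hx.1).2 hx.2), hsqrt_rpow x hx.1, mul_one_div]
      field_simp

/-- The quantity `Ξ₃(t)` of equation (16) in Theorem 2 of the paper: with the Rayleigh
nearest-distance density and the D2D power control `P_D = min{P_max^D, (I_th/β)·R^{α_M}}`,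
for `t > 0`, D2D link distance `d_o > 0`, D2D path-loss exponent `α_D > 0` and
`ϖ₀ = π λ_M (β P_max^D/I_th)^{2/α_M}`,
`E[1/(1 + t P_D β d_o^{−α_D})] = ∫₀^{ϖ₀} e^{−x}/(1 + t I_th (x/(π λ_M))^{α_M/2} d_o^{−α_D}) dx
  + e^{−ϖ₀}/(1 + t P_max^D β d_o^{−α_D})`. -/
theorem d2d_signal_laplace {Ω : Type*} [MeasurableSpace Ω]
    (μ : Measure Ω) [IsProbabilityMeasure μ]
    (R : Ω → ℝ) (hR : Measurable R)
    (lamM : ℝ) (hlam : 0 < lamM)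
    (hdist : Measure.map R μ = (volume : Measure ℝ).withDensity
      (fun r => ENNReal.ofReal
        (if 0 < r then 2 * Real.pi * lamM * r * Real.exp (-(Real.pi * lamM * r ^ 2)) else 0)))
    (PmaxD Ith β αM : ℝ) (hPmax : 0 < PmaxD) (hIth : 0 < Ith) (hβ : 0 < β) (hαM : 0 < αM)
    (PD : Ω → ℝ) (hPD : ∀ ω, PD ω = min PmaxD ((Ith / β) * R ω ^ αM))
    (t do_ αD : ℝ) (ht : 0 < t) (hdo : 0 < do_) (hαD : 0 < αD)
    (ϖ₀ : ℝ) (hϖ₀ : ϖ₀ = Real.pi * lamM * (β * PmaxD / Ith) ^ (2 / αM)) :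
    ∫ ω, 1 / (1 + t * PD ω * β * do_ ^ (-αD)) ∂μ
      = (∫ x in (0:ℝ)..ϖ₀,
          Real.exp (-x) / (1 + t * Ith * (x / (Real.pi * lamM)) ^ (αM / 2) * do_ ^ (-αD)))
        + Real.exp (-ϖ₀) / (1 + t * PmaxD * β * do_ ^ (-αD)) :=
  d2d_signal_laplace_general μ R hR lamM hlam hdist PmaxD Ith β αM hPmax hIth hβ hαM PD hPD t do_ αD
    ht hdo ϖ₀ hϖ₀
end
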